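/- arXiv:2309.04886 — 7 statements merged into one kernel-verified Lean document; each statement's English description precedes it below -/
import Mathlib

section
/- Suppose (ζ, γ*) is a partially admissible mapping system for a left coideal subalgebra B of a finite-dimensional Hopf algebra H, with dual maps γ* : H* → (H/B⁺H)* and ζ* : B* → H* as usual. Then for every f ∈ (H/B⁺H)* and h* ∈ H*, the identity Σ f₍₁₎ · γ̄*(h* f₍₂₎) = ⟨f,1⟩ · γ̄*(h*) holds in (H/B⁺H)*, where γ̄* is the convolution inverse of γ*, and f ↦ Σ f₍₁₎ ⊗ f₍₂₎ ∈ (H/B⁺H)* ⊗ H* denotes the right H*-comodule structure of (H/B⁺H)* induced by π*. -/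
/-!
Write `γ̄ ∘ π` for the convolution inverse of `γ ∘ π`. Since `(ι ∘ ζ) ∗ (γ ∘ π) = id`, it equals
`S ∗ (ι ∘ ζ)`, i.e. `γ̄(π a) = Σ S(a₁) ζ(a₂)`. Evaluated at `π a`, the left-hand side becomes
`Σ u(S(a₁) ζ(a₂)₁) f(π(ζ(a₂)₂))`: the factor `a₁ S(a₂)` cancels. As `Δ(B) ⊆ H ⊗ B` and `π` kills
`B⁺`, `f(π b) = ε(b) f(π 1)` on `B`, and the counit axiom collapses the sum to `f(π 1) u(γ̄(π a))`.
-/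

open TensorProduct

noncomputable def convMap (k : Type*) {H M : Type*} [CommSemiring k]
    [AddCommMonoid H] [Module k H] [Coalgebra k H] [Semiring M] [Algebra k M]
    (f g : H →ₗ[k] M) : H →ₗ[k] M :=
  LinearMap.mul' k M ∘ₗ TensorProduct.map f g ∘ₗ Coalgebra.comul

open WithConv Coalgebra

section Hit

variable {R H : Type*} [CommSemiring R] [AddCommMonoid H] [Module R H] [Coalgebra R H]

/-- `rightHit u h = h ↼ u = Σ u(h₁) h₂` and `leftHit χ h = χ ⇀ h = Σ h₁ χ(h₂)`. -/
def rightHit (u : Module.Dual R H) : H →ₗ[R] H :=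
  (TensorProduct.lid R H).toLinearMap ∘ₗ map u LinearMap.id ∘ₗ comul

def leftHit (χ : Module.Dual R H) : H →ₗ[R] H :=
  (TensorProduct.rid R H).toLinearMap ∘ₗ map LinearMap.id χ ∘ₗ comul

theorem leftHit_eq_smul_of_mem {B : Submodule R H}
    (hB : ∀ b : B, comul (b : H) ∈ LinearMap.range (map LinearMap.id B.subtype))
    {χ : Module.Dual R H} {c : R} (hχ : ∀ b ∈ B, χ b = counit (R := R) b * c) {b : H}
    (hb : b ∈ B) : leftHit χ b = c • b := by
  obtain ⟨w, hw⟩ := hB ⟨b, hb⟩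
  have hχB : χ ∘ₗ B.subtype = c • (counit ∘ₗ B.subtype) := by
    ext ⟨x, hx⟩
    simp [hχ x hx, mul_comm]
  have hcounit := lTensor_counit_comul (R := R) b
  rw [← hw, LinearMap.lTensor, ← LinearMap.comp_apply, ← map_comp, LinearMap.comp_id] at hcounit
  simp only [leftHit, LinearMap.comp_apply, ← hw]
  rw [← LinearMap.comp_apply (map _ _), ← map_comp, LinearMap.comp_id, hχB, map_smul_right,
    LinearMap.smul_apply, map_smul, hcounit, LinearEquiv.coe_coe, rid_tmul, one_smul]

end Hit

theorem comp_convMul_eq_comp_convMul {R C X Y A A' N : Type*} [CommSemiring R]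
    [AddCommMonoid C] [Module R C] [Coalgebra R C]
    [AddCommMonoid X] [Module R X] [AddCommMonoid Y] [Module R Y]
    [Semiring A] [Algebra R A] [Semiring A'] [Algebra R A'] [AddCommMonoid N] [Module R N]
    {P : A →ₗ[R] N} {P' : A' →ₗ[R] N} {α : X →ₗ[R] A} {β : Y →ₗ[R] A} {α' : X →ₗ[R] A'}
    {β' : Y →ₗ[R] A'}
    (h : P ∘ₗ LinearMap.mul' R A ∘ₗ map α β = P' ∘ₗ LinearMap.mul' R A' ∘ₗ map α' β')
    (φ : C →ₗ[R] X) (ψ : C →ₗ[R] Y) :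
    P ∘ₗ (toConv (α ∘ₗ φ) * toConv (β ∘ₗ ψ)).ofConv =
      P' ∘ₗ (toConv (α' ∘ₗ φ) * toConv (β' ∘ₗ ψ)).ofConv := by
  simp only [← LinearMap.comp_assoc] at h
  simp only [LinearMap.convMul_def, ofConv_toConv, map_comp, ← LinearMap.comp_assoc, h]

section Hopf

variable {R H : Type*} [CommSemiring R] [Semiring H] [HopfAlgebra R H]

theorem includeLeft_convMul_includeRight :
    toConv (Algebra.TensorProduct.includeLeft : H →ₐ[R] H ⊗[R] H).toLinearMap *
      toConv (Algebra.TensorProduct.includeRight : H →ₐ[R] H ⊗[R] H).toLinearMap =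
      toConv (comul : H →ₗ[R] H ⊗[R] H) := by
  ext a
  rw [(ℛ R a).convMul_apply, ← (ℛ R a).eq]
  simp

theorem includeRight_convMul_comul_comp_antipode :
    toConv (Algebra.TensorProduct.includeRight : H →ₐ[R] H ⊗[R] H).toLinearMap *
      toConv (comul ∘ₗ HopfAlgebra.antipode R (A := H)) =
      toConv ((Algebra.TensorProduct.includeLeft : H →ₐ[R] H ⊗[R] H).toLinearMap ∘ₗ
        HopfAlgebra.antipode R) := by
  set ιₗ : H →ₐ[R] H ⊗[R] H := Algebra.TensorProduct.includeLeft
  have hS : toConv (ιₗ.toLinearMap ∘ₗ HopfAlgebra.antipode R) * toConv ιₗ.toLinearMap = 1 := by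
    rw [← ofConv_injective.eq_iff, ← LinearMap.algHom_comp_convOne ιₗ,
      ← LinearMap.antipode_mul_id, LinearMap.algHom_comp_convMul_distrib]
    rfl
  calc _ = toConv (ιₗ.toLinearMap ∘ₗ HopfAlgebra.antipode R) * toConv ιₗ.toLinearMap *
        toConv (Algebra.TensorProduct.includeRight : H →ₐ[R] H ⊗[R] H).toLinearMap *
        toConv (comul ∘ₗ HopfAlgebra.antipode R (A := H)) := by rw [hS, one_mul]
    _ = _ := by
      rw [mul_assoc _ (toConv ιₗ.toLinearMap), includeLeft_convMul_includeRight, mul_assoc,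
        LinearMap.comul_right_inv, mul_one]

theorem comp_id_convMul_rightHit_comp_antipode_convMul (u χ : Module.Dual R H)
    (ψ : H →ₗ[R] H) :
    χ ∘ₗ (toConv LinearMap.id * toConv
        (rightHit u ∘ₗ (toConv (HopfAlgebra.antipode R) * toConv ψ).ofConv)).ofConv =
      u ∘ₗ (toConv (HopfAlgebra.antipode R) * toConv (leftHit χ ∘ₗ ψ)).ofConv := by
  -- Both sides are `u ⊗ χ` applied to `Σ (1 ⊗ a₁) Δ(S(a₂) ψ(a₃)) = Σ (S(a₁) ⊗ 1) Δ(ψ(a₂))`.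
  set ιₗ : H →ₐ[R] H ⊗[R] H := Algebra.TensorProduct.includeLeft
  set ιᵣ : H →ₐ[R] H ⊗[R] H := Algebra.TensorProduct.includeRight
  set Φ : H ⊗[R] H →ₗ[R] R := LinearMap.mul' R R ∘ₗ map u χ
  have hright : χ ∘ₗ LinearMap.mul' R H ∘ₗ
        map LinearMap.id ((TensorProduct.lid R H).toLinearMap ∘ₗ map u LinearMap.id)
      = Φ ∘ₗ LinearMap.mul' R (H ⊗[R] H) ∘ₗ map ιᵣ.toLinearMap LinearMap.id := by
    ext x y z
    simp [Φ, ιᵣ]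
  have hleft : Φ ∘ₗ LinearMap.mul' R (H ⊗[R] H) ∘ₗ map ιₗ.toLinearMap LinearMap.id
      = u ∘ₗ LinearMap.mul' R H ∘ₗ
        map LinearMap.id ((TensorProduct.rid R H).toLinearMap ∘ₗ map LinearMap.id χ) := by
    ext x y z
    simp [Φ, ιₗ, mul_comm]
  have hcomul : toConv (comul ∘ₗ (toConv (HopfAlgebra.antipode R) * toConv ψ).ofConv) =
      toConv (comul ∘ₗ HopfAlgebra.antipode R (A := H)) * toConv (comul ∘ₗ ψ) :=
    congrArg toConv (LinearMap.algHom_comp_convMul_distrib (Bialgebra.comulAlgHom R H) _ _)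
  set F := (toConv (HopfAlgebra.antipode R) * toConv ψ).ofConv
  calc _ = χ ∘ₗ (toConv (LinearMap.id ∘ₗ LinearMap.id) * toConv
        (((TensorProduct.lid R H).toLinearMap ∘ₗ map u LinearMap.id) ∘ₗ comul ∘ₗ F)).ofConv := by
        rw [LinearMap.comp_id]; rfl
    _ = Φ ∘ₗ (toConv (ιᵣ.toLinearMap ∘ₗ LinearMap.id) *
          toConv (LinearMap.id ∘ₗ comul ∘ₗ F)).ofConv :=
        comp_convMul_eq_comp_convMul hright _ _
    _ = Φ ∘ₗ (toConv (ιₗ.toLinearMap ∘ₗ HopfAlgebra.antipode R) *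
          toConv (LinearMap.id ∘ₗ comul ∘ₗ ψ)).ofConv := by
        rw [LinearMap.comp_id, LinearMap.id_comp, LinearMap.id_comp, hcomul, ← mul_assoc,
          includeRight_convMul_comul_comp_antipode]
    _ = u ∘ₗ (toConv (LinearMap.id ∘ₗ HopfAlgebra.antipode R) *
          toConv (((TensorProduct.rid R H).toLinearMap ∘ₗ map LinearMap.id χ) ∘ₗ
            comul ∘ₗ ψ)).ofConv :=
        comp_convMul_eq_comp_convMul hleft _ _
    _ = _ := by rw [LinearMap.id_comp]; rfl

end Hopf

theorem comp_lTensor_comp_comul_comp_eq_comp_convMul {R H C : Type*} [CommSemiring R]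
    [Semiring H] [Bialgebra R H] [AddCommMonoid C] [Module R C] [Coalgebra R C]
    {π : H →ₗ[R] C} (hπ : comul ∘ₗ π = map π π ∘ₗ comul) {act : C ⊗[R] H →ₗ[R] C}
    (hact : ∀ a h : H, act (π a ⊗ₜ[R] h) = π (a * h)) (X : C →ₗ[R] H) :
    act ∘ₗ map LinearMap.id X ∘ₗ comul ∘ₗ π =
      π ∘ₗ (toConv LinearMap.id * toConv (X ∘ₗ π)).ofConv := by
  have hactπ : act ∘ₗ map π LinearMap.id = π ∘ₗ LinearMap.mul' R H := by
    ext a h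
    simp [hact]
  have hmap :
      map LinearMap.id X ∘ₗ map π π = map π LinearMap.id ∘ₗ map LinearMap.id (X ∘ₗ π) := by
    rw [← map_comp, ← map_comp, LinearMap.id_comp, LinearMap.comp_id, LinearMap.id_comp]
  calc act ∘ₗ map LinearMap.id X ∘ₗ comul ∘ₗ π
      = act ∘ₗ (map LinearMap.id X ∘ₗ map π π) ∘ₗ comul := by rw [hπ]; rfl
    _ = (act ∘ₗ map π LinearMap.id) ∘ₗ map LinearMap.id (X ∘ₗ π) ∘ₗ comul := by rw [hmap]; rfl
    _ = _ := by rw [hactπ]; rfl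

theorem apply_eq_counit_smul_apply_one_of_mem {R H M : Type*} [CommRing R] [Ring H]
    [Bialgebra R H] [AddCommGroup M] [Module R M] {B : Subalgebra R H} {π : H →ₗ[R] M}
    (hπ : ∀ b ∈ B, counit (R := R) b = 0 → π b = 0) {b : H} (hb : b ∈ B) :
    π b = counit (R := R) b • π 1 := by
  have := hπ (b - counit (R := R) b • 1) (B.sub_mem hb (B.smul_mem B.one_mem _)) (by simp)
  rwa [map_sub, map_smul, sub_eq_zero] at this

theorem toConv_comp_eq_antipode_convMul {R H C : Type*} [CommSemiring R] [Semiring H]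
    [HopfAlgebra R H] [AddCommMonoid C] [Module R C] [Coalgebra R C] (π : H →ₗc[R] C)
    {ζ : H →ₗ[R] H} {γ γbar : C →ₗ[R] H}
    (hζγ : toConv ζ * toConv (γ ∘ₗ π.toLinearMap) = toConv LinearMap.id)
    (hγ : toConv γ * toConv γbar = 1) :
    toConv (γbar ∘ₗ π.toLinearMap) = toConv (HopfAlgebra.antipode R) * toConv ζ := by
  refine (left_inv_eq_right_inv (a := toConv (γ ∘ₗ π.toLinearMap)) ?_ ?_).symm
  · rw [mul_assoc, hζγ, LinearMap.antipode_mul_id]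
  · apply ofConv_injective
    rw [← LinearMap.convMul_comp_coalgHom_distrib, hγ]
    ext
    simp

/-- Evaluated at `x : C`, the left-hand side is `Σ u(γ̄(x₂)₁) f(x₁ ⊲ γ̄(x₂)₂)`, which is
`Σ f₍₁₎ · γ̄*(u · f₍₂₎)` with the products and comodule structure of the duals unfolded. -/
theorem stmt10_general {k H C : Type*} [Field k] [Ring H] [HopfAlgebra k H]
    [AddCommGroup C] [Module k C] [Coalgebra k C]
    (B : Subalgebra k H)
    -- B is a left coideal subalgebra: Δ(B) ⊆ H ⊗ B
    (hB : ∀ b : B, Coalgebra.comul (b : H) ∈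
      LinearMap.range (TensorProduct.map (LinearMap.id : H →ₗ[k] H) B.val.toLinearMap))
    -- π : H → C = H/B⁺H, the quotient map of right H-module coalgebras
    (π : H →ₗ[k] C) (hπsurj : Function.Surjective π)
    (hπcounit : (Coalgebra.counit : C →ₗ[k] k) ∘ₗ π = Coalgebra.counit)
    (hπcomul : Coalgebra.comul ∘ₗ π = (TensorProduct.map π π) ∘ₗ Coalgebra.comul)
    (hπker : LinearMap.ker π = Submodule.span k
      {z : H | ∃ b ∈ B, ∃ h : H, Coalgebra.counit (R := k) b = 0 ∧ z = b * h})
    -- the right H-action ⊲ on C, for which π is a right H-module map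
    (act : C ⊗[k] H →ₗ[k] C)
    (hact : ∀ a h : H, act (π a ⊗ₜ[k] h) = π (a * h))
    -- the partially admissible mapping system (ζ, γ*):
    (ζ : H →ₗ[k] B) (γ γbar : C →ₗ[k] H)
    -- γ̄ is the convolution inverse of γ
    (hγinv₁ : convMap k γ γbar =
      (Algebra.linearMap k H) ∘ₗ (Coalgebra.counit : C →ₗ[k] k))
    -- (ι∘ζ) ∗ (γ∘π) = id_H
    (hmain : LinearMap.mul' k H ∘ₗ
        TensorProduct.map (B.val.toLinearMap ∘ₗ ζ) (γ ∘ₗ π) ∘ₗ Coalgebra.comul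
      = LinearMap.id) :
    ∀ (f : Module.Dual k C) (u : Module.Dual k H),
      f ∘ₗ act ∘ₗ
        (TensorProduct.map LinearMap.id
          ((TensorProduct.lid k H).toLinearMap ∘ₗ
            (TensorProduct.map u LinearMap.id) ∘ₗ (Coalgebra.comul : H →ₗ[k] H ⊗[k] H))) ∘ₗ
        (TensorProduct.map LinearMap.id γbar) ∘ₗ
        (Coalgebra.comul : C →ₗ[k] C ⊗[k] C)
      = f (π 1) • (u ∘ₗ γbar) := by
  intro f u
  set ζ' := B.val.toLinearMap ∘ₗ ζ
  have hγbar : toConv (γbar ∘ₗ π) = toConv (HopfAlgebra.antipode k) * toConv ζ' :=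
    toConv_comp_eq_antipode_convMul
      { π with counit_comp := hπcounit, map_comp_comul := hπcomul.symm }
      (congrArg toConv hmain) (congrArg toConv hγinv₁)
  have hπB : ∀ b ∈ B, counit (R := k) b = 0 → π b = 0 := fun b hb hε => by
    rw [← LinearMap.mem_ker, hπker]
    exact Submodule.subset_span ⟨b, hb, 1, hε, (mul_one b).symm⟩
  have hfπ : ∀ b ∈ B, (f ∘ₗ π) b = counit (R := k) b * f (π 1) := fun b hb => by
    rw [LinearMap.comp_apply, apply_eq_counit_smul_apply_one_of_mem hπB hb, map_smul, smul_eq_mul]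
  rw [← LinearMap.cancel_right hπsurj]
  calc _ = f ∘ₗ act ∘ₗ map LinearMap.id (rightHit u ∘ₗ γbar) ∘ₗ comul ∘ₗ π := by
        rw [← LinearMap.comp_assoc comul (map LinearMap.id γbar), ← map_comp, LinearMap.id_comp]
        rfl
    _ = (f ∘ₗ π) ∘ₗ (toConv LinearMap.id * toConv (rightHit u ∘ₗ γbar ∘ₗ π)).ofConv := by
        rw [comp_lTensor_comp_comul_comp_eq_comp_convMul hπcomul hact]
        rfl
    _ = u ∘ₗ (toConv (HopfAlgebra.antipode k) * toConv (leftHit (f ∘ₗ π) ∘ₗ ζ')).ofConv := by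
        rw [← ofConv_toConv (γbar ∘ₗ π), hγbar]
        exact comp_id_convMul_rightHit_comp_antipode_convMul u (f ∘ₗ π) ζ'
    _ = u ∘ₗ (toConv (HopfAlgebra.antipode k) * toConv (f (π 1) • ζ')).ofConv := by
        congr 3
        ext h
        exact leftHit_eq_smul_of_mem (B := Subalgebra.toSubmodule B) hB hfπ (ζ h).2
    _ = _ := by
        rw [toConv_smul, mul_smul_comm, ← hγbar]
        ext
        simp

theorem stmt10 {k H C : Type*} [Field k] [Ring H] [HopfAlgebra k H] [FiniteDimensional k H]
    [AddCommGroup C] [Module k C] [Coalgebra k C]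
    (B : Subalgebra k H)
    -- B is a left coideal subalgebra: Δ(B) ⊆ H ⊗ B
    (hB : ∀ b : B, Coalgebra.comul (b : H) ∈
      LinearMap.range (TensorProduct.map (LinearMap.id : H →ₗ[k] H) B.val.toLinearMap))
    -- π : H → C = H/B⁺H, the quotient map of right H-module coalgebras
    (π : H →ₗ[k] C) (hπsurj : Function.Surjective π)
    (hπcounit : (Coalgebra.counit : C →ₗ[k] k) ∘ₗ π = Coalgebra.counit)
    (hπcomul : Coalgebra.comul ∘ₗ π = (TensorProduct.map π π) ∘ₗ Coalgebra.comul)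
    (hπker : LinearMap.ker π = Submodule.span k
      {z : H | ∃ b ∈ B, ∃ h : H, Coalgebra.counit (R := k) b = 0 ∧ z = b * h})
    -- the right H-action ⊲ on C, for which π is a right H-module map
    (act : C ⊗[k] H →ₗ[k] C)
    (hact : ∀ a h : H, act (π a ⊗ₜ[k] h) = π (a * h))
    -- the partially admissible mapping system (ζ, γ*):
    (ζ ζbar : H →ₗ[k] B) (γ γbar : C →ₗ[k] H)
    -- ζ is a biunitary left B-module map
    (hζmod : ∀ (b : B) (h : H), ζ ((b : H) * h) = b * ζ h)
    (hζ1 : ζ 1 = 1)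
    (hζε : ∀ h : H, Coalgebra.counit (R := k) ((ζ h : H)) = Coalgebra.counit (R := k) h)
    -- γ is a biunitary right H/B⁺H-comodule map
    (hγcomod : (TensorProduct.map LinearMap.id π) ∘ₗ Coalgebra.comul ∘ₗ γ
      = (TensorProduct.map γ LinearMap.id) ∘ₗ Coalgebra.comul)
    (hγ1 : γ (π 1) = 1)
    (hγε : ∀ x : C, Coalgebra.counit (R := k) (γ x) = Coalgebra.counit (R := k) x)
    -- ζ̄ is the convolution inverse of ζ
    (hζinv₁ : convMap k ζ ζbar =
      (Algebra.linearMap k B) ∘ₗ (Coalgebra.counit : H →ₗ[k] k))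
    (hζinv₂ : convMap k ζbar ζ =
      (Algebra.linearMap k B) ∘ₗ (Coalgebra.counit : H →ₗ[k] k))
    -- γ̄ is the convolution inverse of γ
    (hγinv₁ : convMap k γ γbar =
      (Algebra.linearMap k H) ∘ₗ (Coalgebra.counit : C →ₗ[k] k))
    (hγinv₂ : convMap k γbar γ =
      (Algebra.linearMap k H) ∘ₗ (Coalgebra.counit : C →ₗ[k] k))
    -- (ι∘ζ) ∗ (γ∘π) = id_H
    (hmain : LinearMap.mul' k H ∘ₗ
        TensorProduct.map (B.val.toLinearMap ∘ₗ ζ) (γ ∘ₗ π) ∘ₗ Coalgebra.comul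
      = LinearMap.id) :
    ∀ (f : Module.Dual k C) (u : Module.Dual k H),
      f ∘ₗ act ∘ₗ
        (TensorProduct.map LinearMap.id
          ((TensorProduct.lid k H).toLinearMap ∘ₗ
            (TensorProduct.map u LinearMap.id) ∘ₗ (Coalgebra.comul : H →ₗ[k] H ⊗[k] H))) ∘ₗ
        (TensorProduct.map LinearMap.id γbar) ∘ₗ
        (Coalgebra.comul : C →ₗ[k] C ⊗[k] C)
      = f (π 1) • (u ∘ₗ γbar) :=
  stmt10_general B hB π hπsurj hπcounit hπcomul hπker act hact ζ γ γbar hγinv₁ hmain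
end

section
/- With (ζ, γ*) a partially admissible mapping system for B ⊆ H and γ̄* the convolution inverse of γ*, the map γ̄* ∘ S⁻¹ : H* → (H/B⁺H)* is a left (H/B⁺H)*-module map: for all f ∈ (H/B⁺H)* and h* ∈ H*, f · γ̄*(h*) = γ̄*(h* · S⁻¹(π*(f))), equivalently γ̄*(S⁻¹(π*(f)·h*)) = f · γ̄*(S⁻¹(h*)). -/
/-!
STATEMENT 11: With (ζ, γ*) a partially admissible mapping system for B ⊆ H (H a
finite-dimensional Hopf algebra with bijective antipode S) and γ̄* the convolution
inverse of γ*, the map γ̄* ∘ S⁻¹ : H* → (H/B⁺H)* is a left (H/B⁺H)*-module map: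
for all f ∈ (H/B⁺H)* and h* ∈ H*,   f · γ̄*(h*) = γ̄*(h* · S⁻¹(π*(f))).

The quotient H/B⁺H is modelled by the coalgebra C.  Dual structures are unfolded:
γ̄* = (γ̄)ᵀ, π* = πᵀ, the antipode inverse of H* is (S⁻¹)ᵀ, and the products are
convolution products; the identity becomes an equality of functionals on C:
  Σ f(x₍₁₎) h*(γ̄(x₍₂₎))  =  Σ h*(γ̄(x)₍₁₎) · f(π(S⁻¹(γ̄(x)₍₂₎))).
-/

open TensorProduct

open Coalgebra

/-!
The heart of the matter is the identity, in `H ⊗ C`,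
  `Σ γ̄(x)₍₁₎ ⊗ π(S⁻¹(γ̄(x)₍₂₎)) = Σ γ̄(x₍₂₎) ⊗ x₍₁₎`,
from which the theorem follows by pairing with `u ⊗ f`.
Let `H` act on `H ⊗ C` from the right diagonally, `(h ⊗ c)·g = Σ h g₍₁₎ ⊗ c ◁ g₍₂₎`. The map
`h ⊗ c ↦ Σ h₍₁₎ ⊗ c ◁ S⁻¹(h₍₂₎)` sends `(1 ⊗ c)·g` back to `g ⊗ c`, since `Σ g₍₂₎ S⁻¹(g₍₁₎) = ε(g)`.
On the other hand, writing `1 ⊗ x = Σ γ̄(x₍₁₎)γ(x₍₂₎) ⊗ x₍₃₎`, the comodule property of `γ` and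
`γ ∗ γ̄ = ε` give `Σ (1 ⊗ x₍₁₎)·γ̄(x₍₂₎) = γ̄(x) ⊗ π(1)`; applying that map to both sides yields
the identity.
-/

section BilinConv

variable {k D M N P : Type*} [CommSemiring k] [AddCommMonoid D] [Module k D] [Coalgebra k D]
  [AddCommMonoid M] [Module k M] [AddCommMonoid N] [Module k N] [AddCommMonoid P] [Module k P]

def bilinConv (μ : M →ₗ[k] N →ₗ[k] P) (F : D →ₗ[k] M) (G : D →ₗ[k] N) : D →ₗ[k] P :=
  lift μ ∘ₗ map F G ∘ₗ comul

theorem bilinConv_assoc {M' N' Q : Type*} [AddCommMonoid M'] [Module k M'] [AddCommMonoid N']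
    [Module k N'] [AddCommMonoid Q] [Module k Q]
    {μ₁ : M' →ₗ[k] P →ₗ[k] Q} {μ₂ : M →ₗ[k] N →ₗ[k] M'} {μ₃ : M →ₗ[k] N' →ₗ[k] Q}
    {μ₄ : N →ₗ[k] P →ₗ[k] N'} (h : ∀ a b c, μ₁ (μ₂ a b) c = μ₃ a (μ₄ b c))
    (F : D →ₗ[k] M) (G : D →ₗ[k] N) (K : D →ₗ[k] P) :
    bilinConv μ₁ (bilinConv μ₂ F G) K = bilinConv μ₃ F (bilinConv μ₄ G K) := by
  have hL : lift μ₁ ∘ₗ map (lift μ₂ ∘ₗ map F G) K =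
      (lift μ₃ ∘ₗ map F (lift μ₄ ∘ₗ map G K)) ∘ₗ (TensorProduct.assoc k D D D).toLinearMap := by
    apply TensorProduct.ext_threefold
    intro x y z
    simp [h]
  calc bilinConv μ₁ (bilinConv μ₂ F G) K
      = lift μ₁ ∘ₗ map (lift μ₂ ∘ₗ map F G) K ∘ₗ (comul.rTensor D ∘ₗ comul) := by
        simp only [bilinConv, LinearMap.rTensor, ← LinearMap.comp_assoc, ← map_comp,
          LinearMap.comp_id]
    _ = lift μ₃ ∘ₗ map F (lift μ₄ ∘ₗ map G K) ∘ₗ (comul.lTensor D ∘ₗ comul) := by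
        rw [← Coalgebra.coassoc, ← LinearMap.comp_assoc, hL]
        simp only [LinearMap.comp_assoc]
    _ = bilinConv μ₃ F (bilinConv μ₄ G K) := by
        simp only [bilinConv, LinearMap.lTensor, ← LinearMap.comp_assoc, ← map_comp,
          LinearMap.comp_id]

theorem comp_bilinConv {M' N' P' : Type*} [AddCommMonoid M'] [Module k M'] [AddCommMonoid N']
    [Module k N'] [AddCommMonoid P'] [Module k P'] (Φ : P →ₗ[k] P')
    {μ : M →ₗ[k] N →ₗ[k] P} {μ' : M' →ₗ[k] N' →ₗ[k] P'} {F : D →ₗ[k] M} {G : D →ₗ[k] N}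
    {F' : D →ₗ[k] M'} {G' : D →ₗ[k] N'} (h : ∀ a b, Φ (μ (F a) (G b)) = μ' (F' a) (G' b)) :
    Φ ∘ₗ bilinConv μ F G = bilinConv μ' F' G' := by
  have hL : Φ ∘ₗ lift μ ∘ₗ map F G = lift μ' ∘ₗ map F' G' := TensorProduct.ext' fun a b => by
    simp [h]
  simp only [bilinConv, ← LinearMap.comp_assoc] at hL ⊢
  rw [hL]

theorem bilinConv_counit_right (μ : M →ₗ[k] N →ₗ[k] P) (F : D →ₗ[k] M) (n : N) :
    bilinConv μ F (LinearMap.toSpanSingleton k N n ∘ₗ counit) = μ.flip n ∘ₗ F := by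
  have h := congr(lift μ ∘ₗ map F (LinearMap.toSpanSingleton k N n) ∘ₗ
    $(lTensor_counit_comp_comul (R := k) (A := D)))
  simp only [LinearMap.lTensor, ← LinearMap.comp_assoc, ← map_comp, LinearMap.comp_id] at h
  simp only [bilinConv, LinearMap.comp_assoc] at h ⊢
  rw [h]
  ext; simp

theorem bilinConv_counit_left (μ : M →ₗ[k] N →ₗ[k] P) (m : M) (G : D →ₗ[k] N) :
    bilinConv μ (LinearMap.toSpanSingleton k M m ∘ₗ counit) G = μ m ∘ₗ G := by
  have h := congr(lift μ ∘ₗ map (LinearMap.toSpanSingleton k M m) G ∘ₗ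
    $(rTensor_counit_comp_comul (R := k) (A := D)))
  simp only [LinearMap.rTensor, ← LinearMap.comp_assoc, ← map_comp, LinearMap.comp_id] at h
  simp only [bilinConv, LinearMap.comp_assoc] at h ⊢
  rw [h]
  ext; simp

end BilinConv

section Hopf
variable {k H : Type*} [CommSemiring k] [Semiring H] [HopfAlgebra k H]

theorem bilinConv_mul_flip_antipodeInv {Sinv : H →ₗ[k] H}
    (hS₁ : Sinv ∘ₗ HopfAlgebra.antipode k = LinearMap.id)
    (hS₂ : HopfAlgebra.antipode k ∘ₗ Sinv = LinearMap.id) :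
    bilinConv (LinearMap.mul k H).flip Sinv LinearMap.id = Algebra.linearMap k H ∘ₗ counit := by
  have hSSinv : ∀ x, HopfAlgebra.antipode k (Sinv x) = x := fun x => congr($hS₂ x)
  have hS : HopfAlgebra.antipode k ∘ₗ bilinConv (LinearMap.mul k H).flip Sinv LinearMap.id =
      bilinConv (LinearMap.mul k H) LinearMap.id (HopfAlgebra.antipode k) :=
    comp_bilinConv _ fun a b => by simp [HopfAlgebra.antipode_mul_antidistrib, hSSinv]
  have hSinv_one : Sinv ∘ₗ Algebra.linearMap k H = Algebra.linearMap k H := by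
    ext
    simpa [HopfAlgebra.antipode_one] using congr($hS₁ 1)
  calc bilinConv (LinearMap.mul k H).flip Sinv LinearMap.id
      = Sinv ∘ₗ HopfAlgebra.antipode k ∘ₗ
          bilinConv (LinearMap.mul k H).flip Sinv LinearMap.id := by
        rw [← LinearMap.comp_assoc, hS₁, LinearMap.id_comp]
    _ = Algebra.linearMap k H ∘ₗ counit := by
        rw [hS, ← hSinv_one, LinearMap.comp_assoc]
        exact congr(Sinv ∘ₗ $(HopfAlgebra.mul_antipode_lTensor_comul (R := k) (A := H)))

end Hopf

section RightModule
variable {k H C : Type*} [CommSemiring k] [Semiring H] [HopfAlgebra k H]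
  [AddCommMonoid C] [Module k C] (act : C ⊗[k] H →ₗ[k] C)

def diagAct : H ⊗[k] C →ₗ[k] H →ₗ[k] H ⊗[k] C :=
  curry (map (LinearMap.mul' k H) act ∘ₗ (tensorTensorTensorComm k H C H H).toLinearMap ∘ₗ
    comul.lTensor (H ⊗[k] C))

theorem diagAct_tmul (h : H) (c : C) (g : H) :
    diagAct act (h ⊗ₜ c) g = map (LinearMap.mulLeft k h) (curry act c) (comul g) := by
  simp only [diagAct, curry_apply, LinearMap.comp_apply, LinearMap.lTensor_tmul,
    LinearEquiv.coe_coe]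
  induction comul (R := k) g using TensorProduct.induction_on with
  | zero => simp
  | tmul a b => simp
  | add s t hs ht => simp_all [tmul_add]

def mulLeftTensor : H →ₗ[k] H ⊗[k] C →ₗ[k] H ⊗[k] C :=
  LinearMap.rTensorHom C ∘ₗ LinearMap.mul k H

@[simp]
theorem mulLeftTensor_tmul (a h : H) (c : C) :
    mulLeftTensor (k := k) (C := C) a (h ⊗ₜ c) = (a * h) ⊗ₜ c := by
  simp [mulLeftTensor]

theorem mulLeftTensor_diagAct (a : H) (n : H ⊗[k] C) (g : H) :
    mulLeftTensor a (diagAct act n g) = diagAct act (mulLeftTensor a n) g := by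
  induction n using TensorProduct.induction_on with
  | zero => simp
  | tmul h c =>
      rw [diagAct_tmul, mulLeftTensor_tmul, diagAct_tmul]
      induction comul (R := k) g using TensorProduct.induction_on with
      | zero => simp
      | tmul x y => simp
      | add s t hs ht => simp_all
  | add s t hs ht => simp_all

def untwist (Sinv : H →ₗ[k] H) : H ⊗[k] C →ₗ[k] H ⊗[k] C :=
  (act ∘ₗ (TensorProduct.comm k H C).toLinearMap).lTensor H ∘ₗ
    (TensorProduct.assoc k H H C).toLinearMap ∘ₗ (Sinv.lTensor H ∘ₗ comul).rTensor C

theorem untwist_tmul (Sinv : H →ₗ[k] H) (h : H) (c : C) :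
    untwist act Sinv (h ⊗ₜ c) = map LinearMap.id (curry act c ∘ₗ Sinv) (comul h) := by
  simp only [untwist, LinearMap.comp_apply, LinearMap.rTensor_tmul]
  induction comul (R := k) h using TensorProduct.induction_on with
  | zero => simp
  | tmul a b => simp
  | add s t hs ht => simp_all [add_tmul]

theorem diagAct_one_tmul_eq_bilinConv (c : C) :
    diagAct act (1 ⊗ₜ c) =
      bilinConv ((mk k H C).compl₂ (curry act c)) LinearMap.id LinearMap.id := by
  ext h
  rw [diagAct_tmul, LinearMap.mulLeft_one]
  simp only [bilinConv, LinearMap.comp_apply, map_id, LinearMap.id_apply]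
  induction comul (R := k) h using TensorProduct.induction_on with
  | zero => simp
  | tmul a b => simp
  | add s t hs ht => simp_all

theorem untwist_diagAct_one_tmul {Sinv : H →ₗ[k] H}
    (hS₁ : Sinv ∘ₗ HopfAlgebra.antipode k = LinearMap.id)
    (hS₂ : HopfAlgebra.antipode k ∘ₗ Sinv = LinearMap.id)
    (hact_one : ∀ c : C, act (c ⊗ₜ 1) = c)
    (hact_mul : ∀ (c : C) (g g' : H), act (act (c ⊗ₜ g) ⊗ₜ g') = act (c ⊗ₜ (g * g')))
    (c : C) (h : H) :
    untwist act Sinv (diagAct act (1 ⊗ₜ c) h) = h ⊗ₜ c := by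
  -- `ν (a ⊗ s) g = a ⊗ c ◁ (g * s)`
  set ν : H ⊗[k] H →ₗ[k] H →ₗ[k] H ⊗[k] C :=
    (LinearMap.lTensorHom H ∘ₗ LinearMap.llcomp k H H C (curry act c) ∘ₗ LinearMap.mul k H).flip
  have hν : untwist act Sinv ∘ₗ diagAct act (1 ⊗ₜ c) =
      bilinConv ν (bilinConv (mk k H H) LinearMap.id Sinv) LinearMap.id := by
    rw [diagAct_one_tmul_eq_bilinConv]
    refine comp_bilinConv _ fun a b => ?_
    simp only [LinearMap.compl₂_apply, mk_apply, untwist_tmul, bilinConv, LinearMap.comp_apply,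
      lift_mk, LinearMap.id_apply, ν, LinearMap.flip_apply, LinearMap.coe_lTensorHom,
      LinearMap.lTensor]
    conv_rhs => rw [← LinearMap.comp_apply, ← map_comp]
    congr 2
    ext g
    simp [hact_mul]
  calc untwist act Sinv (diagAct act (1 ⊗ₜ c) h)
      = bilinConv ν (bilinConv (mk k H H) LinearMap.id Sinv) LinearMap.id h := congr($hν h)
    _ = bilinConv ((mk k H C).compl₂ (curry act c)) LinearMap.id
          (bilinConv (LinearMap.mul k H).flip Sinv LinearMap.id) h :=
        LinearMap.congr_fun (bilinConv_assoc (fun a s b => by simp [ν]) _ _ _) h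
    _ = h ⊗ₜ c := by
        rw [bilinConv_mul_flip_antipodeInv hS₁ hS₂,
          ← LinearMap.toSpanSingleton_one_eq_algebraLinearMap, bilinConv_counit_right]
        simp [hact_one]

theorem map_id_comul_mul {π : H →ₗ[k] C} (hact : ∀ a h : H, act (π a ⊗ₜ h) = π (a * h))
    (a b : H) :
    map LinearMap.id π (comul (a * b)) = diagAct act (map LinearMap.id π (comul a)) b := by
  rw [Bialgebra.comul_mul]
  induction comul (R := k) a using TensorProduct.induction_on with
  | zero => simp
  | tmul x y =>
      rw [map_tmul, diagAct_tmul]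
      induction comul (R := k) b using TensorProduct.induction_on with
      | zero => simp
      | tmul p q => simp [hact]
      | add s t hs ht => simp_all [mul_add]
  | add s t hs ht => simp_all [add_mul]

theorem untwist_comp_mk_flip {π : H →ₗ[k] C} {Sinv : H →ₗ[k] H}
    (hact : ∀ a h : H, act (π a ⊗ₜ h) = π (a * h)) :
    untwist act Sinv ∘ₗ (mk k H C).flip (π 1) = map LinearMap.id (π ∘ₗ Sinv) ∘ₗ comul := by
  ext h
  simp only [LinearMap.comp_apply, LinearMap.flip_apply, mk_apply, untwist_tmul]
  congr 2
  ext s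
  simp [hact]

end RightModule

section GammaInv
variable {k H C : Type*} [CommSemiring k] [Semiring H] [HopfAlgebra k H]
  [AddCommMonoid C] [Module k C] [Coalgebra k C] {act : C ⊗[k] H →ₗ[k] C} {π : H →ₗ[k] C}
  {γ γbar : C →ₗ[k] H}

theorem bilinConv_diagAct_mk_one (hact : ∀ a h : H, act (π a ⊗ₜ h) = π (a * h))
    (hγcomod : map LinearMap.id π ∘ₗ comul ∘ₗ γ = map γ LinearMap.id ∘ₗ comul)
    (hγinv₁ : convMap k γ γbar = Algebra.linearMap k H ∘ₗ counit)
    (hγinv₂ : convMap k γbar γ = Algebra.linearMap k H ∘ₗ counit) :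
    bilinConv (diagAct act) (mk k H C 1) γbar = (mk k H C).flip (π 1) ∘ₗ γbar := by
  set ρ : H →ₗ[k] H ⊗[k] C := map LinearMap.id π ∘ₗ comul
  have hA : bilinConv mulLeftTensor γbar (ρ ∘ₗ γ) = mk k H C 1 := by
    calc bilinConv mulLeftTensor γbar (ρ ∘ₗ γ)
        = bilinConv mulLeftTensor γbar (bilinConv (mk k H C) γ LinearMap.id) := by
          simp only [ρ, LinearMap.comp_assoc, hγcomod, bilinConv, lift_mk, LinearMap.id_comp]
      _ = bilinConv (mk k H C) (convMap k γbar γ) LinearMap.id :=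
          (bilinConv_assoc (fun a b c => by simp) _ _ _).symm
      _ = mk k H C 1 := by
          rw [hγinv₂, ← LinearMap.toSpanSingleton_one_eq_algebraLinearMap,
            bilinConv_counit_left, LinearMap.comp_id]
  have hB : bilinConv (diagAct act) (ρ ∘ₗ γ) γbar =
      LinearMap.toSpanSingleton k _ ((1 : H) ⊗ₜ[k] π 1) ∘ₗ counit := by
    calc bilinConv (diagAct act) (ρ ∘ₗ γ) γbar = ρ ∘ₗ convMap k γ γbar :=
          (comp_bilinConv ρ fun a b => map_id_comul_mul act hact _ _).symm
      _ = _ := by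
          rw [hγinv₁]
          ext x
          simp [ρ, Algebra.algebraMap_eq_smul_one, Bialgebra.comul_one,
            Algebra.TensorProduct.one_def]
  calc bilinConv (diagAct act) (mk k H C 1) γbar
      = bilinConv (diagAct act) (bilinConv mulLeftTensor γbar (ρ ∘ₗ γ)) γbar := by rw [hA]
    _ = bilinConv mulLeftTensor γbar (bilinConv (diagAct act) (ρ ∘ₗ γ) γbar) :=
        bilinConv_assoc (fun a n g => (mulLeftTensor_diagAct act a n g).symm) _ _ _
    _ = (mk k H C).flip (π 1) ∘ₗ γbar := by
        rw [hB, bilinConv_counit_right]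
        ext x
        simp

theorem map_id_comp_comul_comp_eq_bilinConv {Sinv : H →ₗ[k] H}
    (hπsurj : Function.Surjective π) (hact : ∀ a h : H, act (π a ⊗ₜ h) = π (a * h))
    (hγcomod : map LinearMap.id π ∘ₗ comul ∘ₗ γ = map γ LinearMap.id ∘ₗ comul)
    (hγinv₁ : convMap k γ γbar = Algebra.linearMap k H ∘ₗ counit)
    (hγinv₂ : convMap k γbar γ = Algebra.linearMap k H ∘ₗ counit)
    (hS₁ : Sinv ∘ₗ HopfAlgebra.antipode k = LinearMap.id)
    (hS₂ : HopfAlgebra.antipode k ∘ₗ Sinv = LinearMap.id) :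
    map LinearMap.id (π ∘ₗ Sinv) ∘ₗ comul ∘ₗ γbar =
      bilinConv (mk k H C).flip LinearMap.id γbar := by
  have hact_one : ∀ c : C, act (c ⊗ₜ 1) = c := fun c => by
    obtain ⟨a, rfl⟩ := hπsurj c
    rw [hact, mul_one]
  have hact_mul : ∀ (c : C) (g g' : H), act (act (c ⊗ₜ g) ⊗ₜ g') = act (c ⊗ₜ (g * g')) :=
    fun c g g' => by
      obtain ⟨a, rfl⟩ := hπsurj c
      rw [hact, hact, hact, mul_assoc]
  calc map LinearMap.id (π ∘ₗ Sinv) ∘ₗ comul ∘ₗ γbar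
      = untwist act Sinv ∘ₗ (mk k H C).flip (π 1) ∘ₗ γbar := by
        rw [← LinearMap.comp_assoc, ← untwist_comp_mk_flip act hact, LinearMap.comp_assoc]
    _ = untwist act Sinv ∘ₗ bilinConv (diagAct act) (mk k H C 1) γbar := by
        rw [bilinConv_diagAct_mk_one hact hγcomod hγinv₁ hγinv₂]
    _ = bilinConv (mk k H C).flip LinearMap.id γbar :=
        comp_bilinConv _ fun c x =>
          untwist_diagAct_one_tmul act hS₁ hS₂ hact_one hact_mul c (γbar x)

end GammaInv

theorem stmt11_general {k H C : Type*} [Field k] [Ring H] [HopfAlgebra k H]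
    [AddCommGroup C] [Module k C] [Coalgebra k C]
    -- π : H → C = H/B⁺H, the quotient map of right H-module coalgebras
    (π : H →ₗ[k] C) (hπsurj : Function.Surjective π)
    -- the right H-action ⊲ on C, for which π is a right H-module map
    (act : C ⊗[k] H →ₗ[k] C)
    (hact : ∀ a h : H, act (π a ⊗ₜ[k] h) = π (a * h))
    -- the partially admissible mapping system (ζ, γ*):
    (γ γbar : C →ₗ[k] H)
    -- γ is a biunitary right H/B⁺H-comodule map
    (hγcomod : (TensorProduct.map LinearMap.id π) ∘ₗ Coalgebra.comul ∘ₗ γ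
      = (TensorProduct.map γ LinearMap.id) ∘ₗ Coalgebra.comul)
    -- γ̄ is the convolution inverse of γ
    (hγinv₁ : convMap k γ γbar =
      (Algebra.linearMap k H) ∘ₗ (Coalgebra.counit : C →ₗ[k] k))
    (hγinv₂ : convMap k γbar γ =
      (Algebra.linearMap k H) ∘ₗ (Coalgebra.counit : C →ₗ[k] k))
    -- the antipode is bijective, with inverse Sinv
    (Sinv : H →ₗ[k] H)
    (hS₁ : Sinv ∘ₗ HopfAlgebra.antipode (R := k) = LinearMap.id)
    (hS₂ : HopfAlgebra.antipode (R := k) ∘ₗ Sinv = LinearMap.id) :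
    ∀ (f : Module.Dual k C) (u : Module.Dual k H),
      LinearMap.mul' k k ∘ₗ TensorProduct.map f (u ∘ₗ γbar) ∘ₗ
          (Coalgebra.comul : C →ₗ[k] C ⊗[k] C)
      = LinearMap.mul' k k ∘ₗ TensorProduct.map u (f ∘ₗ π ∘ₗ Sinv) ∘ₗ
          (Coalgebra.comul : H →ₗ[k] H ⊗[k] H) ∘ₗ γbar := by
  intro f u
  have hkey := map_id_comp_comul_comp_eq_bilinConv hπsurj hact hγcomod hγinv₁ hγinv₂ hS₁ hS₂
  calc LinearMap.mul' k k ∘ₗ map f (u ∘ₗ γbar) ∘ₗ comul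
      = (LinearMap.mul' k k ∘ₗ map u f) ∘ₗ bilinConv (mk k H C).flip LinearMap.id γbar :=
        (comp_bilinConv _ fun c h => by simp [mul_comm]).symm
    _ = LinearMap.mul' k k ∘ₗ map u (f ∘ₗ π ∘ₗ Sinv) ∘ₗ comul ∘ₗ γbar := by
        rw [← hkey]
        simp only [LinearMap.comp_assoc, ← LinearMap.comp_assoc _ _ (map u f), ← map_comp,
          LinearMap.comp_id]

theorem stmt11 {k H C : Type*} [Field k] [Ring H] [HopfAlgebra k H] [FiniteDimensional k H]
    [AddCommGroup C] [Module k C] [Coalgebra k C]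
    (B : Subalgebra k H)
    -- B is a left coideal subalgebra: Δ(B) ⊆ H ⊗ B
    (hB : ∀ b : B, Coalgebra.comul (b : H) ∈
      LinearMap.range (TensorProduct.map (LinearMap.id : H →ₗ[k] H) B.val.toLinearMap))
    -- π : H → C = H/B⁺H, the quotient map of right H-module coalgebras
    (π : H →ₗ[k] C) (hπsurj : Function.Surjective π)
    (hπcounit : (Coalgebra.counit : C →ₗ[k] k) ∘ₗ π = Coalgebra.counit)
    (hπcomul : Coalgebra.comul ∘ₗ π = (TensorProduct.map π π) ∘ₗ Coalgebra.comul)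
    (hπker : LinearMap.ker π = Submodule.span k
      {z : H | ∃ b ∈ B, ∃ h : H, Coalgebra.counit (R := k) b = 0 ∧ z = b * h})
    -- the right H-action ⊲ on C, for which π is a right H-module map
    (act : C ⊗[k] H →ₗ[k] C)
    (hact : ∀ a h : H, act (π a ⊗ₜ[k] h) = π (a * h))
    -- the partially admissible mapping system (ζ, γ*):
    (ζ ζbar : H →ₗ[k] B) (γ γbar : C →ₗ[k] H)
    -- ζ is a biunitary left B-module map
    (hζmod : ∀ (b : B) (h : H), ζ ((b : H) * h) = b * ζ h)
    (hζ1 : ζ 1 = 1)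
    (hζε : ∀ h : H, Coalgebra.counit (R := k) ((ζ h : H)) = Coalgebra.counit (R := k) h)
    -- γ is a biunitary right H/B⁺H-comodule map
    (hγcomod : (TensorProduct.map LinearMap.id π) ∘ₗ Coalgebra.comul ∘ₗ γ
      = (TensorProduct.map γ LinearMap.id) ∘ₗ Coalgebra.comul)
    (hγ1 : γ (π 1) = 1)
    (hγε : ∀ x : C, Coalgebra.counit (R := k) (γ x) = Coalgebra.counit (R := k) x)
    -- ζ̄ is the convolution inverse of ζ
    (hζinv₁ : convMap k ζ ζbar =
      (Algebra.linearMap k B) ∘ₗ (Coalgebra.counit : H →ₗ[k] k))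
    (hζinv₂ : convMap k ζbar ζ =
      (Algebra.linearMap k B) ∘ₗ (Coalgebra.counit : H →ₗ[k] k))
    -- γ̄ is the convolution inverse of γ
    (hγinv₁ : convMap k γ γbar =
      (Algebra.linearMap k H) ∘ₗ (Coalgebra.counit : C →ₗ[k] k))
    (hγinv₂ : convMap k γbar γ =
      (Algebra.linearMap k H) ∘ₗ (Coalgebra.counit : C →ₗ[k] k))
    -- (ι∘ζ) ∗ (γ∘π) = id_H
    (hmain : LinearMap.mul' k H ∘ₗ
        TensorProduct.map (B.val.toLinearMap ∘ₗ ζ) (γ ∘ₗ π) ∘ₗ Coalgebra.comul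
      = LinearMap.id)
    -- the antipode is bijective, with inverse Sinv
    (Sinv : H →ₗ[k] H)
    (hS₁ : Sinv ∘ₗ HopfAlgebra.antipode (R := k) = LinearMap.id)
    (hS₂ : HopfAlgebra.antipode (R := k) ∘ₗ Sinv = LinearMap.id) :
    ∀ (f : Module.Dual k C) (u : Module.Dual k H),
      LinearMap.mul' k k ∘ₗ TensorProduct.map f (u ∘ₗ γbar) ∘ₗ
          (Coalgebra.comul : C →ₗ[k] C ⊗[k] C)
      = LinearMap.mul' k k ∘ₗ TensorProduct.map u (f ∘ₗ π ∘ₗ Sinv) ∘ₗ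
          (Coalgebra.comul : H →ₗ[k] H ⊗[k] H) ∘ₗ γbar :=
  stmt11_general π hπsurj act hact γ γbar hγcomod hγinv₁ hγinv₂ Sinv hS₁ hS₂
end

section
/- Let (ζ, γ*) be a partially admissible mapping system for a left coideal subalgebra B of a finite-dimensional Hopf algebra H. Then dim H = dim B · dim(H/B⁺H). -/
/-!
STATEMENT 13: Let (ζ, γ*) be a partially admissible mapping system for a left coideal
subalgebra B of a finite-dimensional Hopf algebra H.  Then
dim H = dim B · dim(H/B⁺H).  (The quotient H/B⁺H is modelled by an abstract
coalgebra C with surjective coalgebra map π whose kernel is the span of B⁺H;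
the dual conditions of the mapping system hold automatically, being equivalent
to the primal ones.)
-/

open TensorProduct

/-
The map `θ : B ⊗ C → H`, `b ⊗ c ↦ b γ(c)`, is an isomorphism, so `dim H = dim B · dim C`.
It is onto because `(ζ ∗ γπ) = id` writes `h = ζ(h₁) γ(π h₂)`. For injectivity,
`h ↦ h₁ γ̄(π h₂) ⊗ π h₃` is a left inverse: since `Δ(B) ⊆ H ⊗ B` and `π` kills `B⁺H`, the map
`h ↦ h₁ ⊗ π h₂` is left `B`-linear, and since `γ` is a `C`-comodule map with convolution
inverse `γ̄`, the first factor applied to `γ(c)` gives `ε(c)`.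
-/

namespace LeftCoidealSubalgebra

open LinearMap Coalgebra

variable {k H C : Type*} [CommRing k] [Ring H] [Bialgebra k H] [AddCommGroup C] [Module k C]

theorem map_mul_eq_counit_smul {B : Subalgebra k H} {π : H →ₗ[k] C}
    (hπ : ∀ b ∈ B, counit (R := k) b = 0 → ∀ h : H, π (b * h) = 0)
    {b : H} (hb : b ∈ B) (y : H) : π (b * y) = counit (R := k) b • π y := by
  have h := hπ (b - counit (R := k) b • 1) (B.sub_mem hb (B.smul_mem B.one_mem _)) (by simp) y
  rwa [sub_mul, map_sub, sub_eq_zero, smul_mul_assoc, one_mul, map_smul] at h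

def IsLeftCoideal (B : Subalgebra k H) : Prop :=
  ∀ b ∈ B, comul (R := k) b ∈ range (lTensor H B.val.toLinearMap)

noncomputable def coaction (π : H →ₗ[k] C) : H →ₗ[k] H ⊗[k] C :=
  lTensor H π ∘ₗ comul

/- In Sweedler notation, `coinvariantPart π γbar h = h₁ γbar (π h₂)` and
`decompose π γbar h = h₁ γbar (π h₂) ⊗ π h₃`; the latter inverts `b ⊗ c ↦ b γ c`. -/
section

variable (π : H →ₗ[k] C) (γbar : C →ₗ[k] H)

noncomputable def coinvariantPart : H →ₗ[k] H :=
  mul' k H ∘ₗ lTensor H γbar ∘ₗ coaction π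

noncomputable def decompose : H →ₗ[k] H ⊗[k] C :=
  rTensor C (coinvariantPart π γbar) ∘ₗ coaction π

end

noncomputable def tensorMul (B : Subalgebra k H) (γ : C →ₗ[k] H) : B ⊗[k] C →ₗ[k] H :=
  mul' k H ∘ₗ map B.val.toLinearMap γ

theorem lTensor_tmul_mul {B : Subalgebra k H} {π : H →ₗ[k] C}
    (hπ : ∀ b ∈ B, ∀ y, π (b * y) = counit (R := k) b • π y) (h : H) (b : B)
    (u : H ⊗[k] H) :
    lTensor H π ((h ⊗ₜ (b : H)) * u)
      = rTensor C (mulLeft k (counit (R := k) (b : H) • h)) (lTensor H π u) := by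
  induction u using TensorProduct.induction_on with
  | zero => simp
  | add u₁ u₂ h₁ h₂ => rw [mul_add, map_add, h₁, h₂, map_add, map_add]
  | tmul x y =>
    simp only [Algebra.TensorProduct.tmul_mul_tmul, lTensor_tmul, rTensor_tmul,
      mulLeft_apply, hπ b b.2, tmul_smul, smul_mul_assoc, smul_tmul']

theorem coaction_mul_of_mem {B : Subalgebra k H} (hB : IsLeftCoideal B)
    {π : H →ₗ[k] C} (hπ : ∀ b ∈ B, ∀ y, π (b * y) = counit (R := k) b • π y)
    {b : H} (hb : b ∈ B) (x : H) :
    coaction π (b * x) = rTensor C (mulLeft k b) (coaction π x) := by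
  obtain ⟨t, ht⟩ := hB b hb
  have hbt : b = TensorProduct.rid k H (lTensor H (counit ∘ₗ B.val.toLinearMap) t) := by
    rw [lTensor_comp, comp_apply, ht, lTensor_counit_comul, TensorProduct.rid_tmul, one_smul]
  rw [coaction, comp_apply, comp_apply, Bialgebra.comul_mul, ← ht, hbt]
  generalize comul (R := k) x = u
  clear ht hbt
  induction t using TensorProduct.induction_on with
  | zero => simp
  | add t₁ t₂ h₁ h₂ =>
    have : ∀ a₁ a₂ : H, mulLeft k (a₁ + a₂) = mulLeft k a₁ + mulLeft k a₂ := fun _ _ =>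
      LinearMap.ext fun _ => add_mul _ _ _
    simp only [map_add, add_mul, h₁, h₂, this, rTensor_add, LinearMap.add_apply]
  | tmul h b' => simpa using lTensor_tmul_mul hπ h b' u

theorem coinvariantPart_mul_of_mem {B : Subalgebra k H} (hB : IsLeftCoideal B)
    {π : H →ₗ[k] C} (hπ : ∀ b ∈ B, ∀ y, π (b * y) = counit (R := k) b • π y)
    (γbar : C →ₗ[k] H) {b : H} (hb : b ∈ B) (x : H) :
    coinvariantPart π γbar (b * x) = b * coinvariantPart π γbar x := by
  rw [coinvariantPart, comp_apply, comp_apply, coaction_mul_of_mem hB hπ hb, comp_apply,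
    comp_apply]
  generalize coaction π x = u
  induction u using TensorProduct.induction_on with
  | zero => simp
  | add u₁ u₂ h₁ h₂ => simp only [map_add, h₁, h₂, mul_add]
  | tmul h c => simp [mul_assoc]

theorem tensorMul_comp_map_comul (B : Subalgebra k H) (ζ : H →ₗ[k] B) (π : H →ₗ[k] C)
    (γ : C →ₗ[k] H) :
    tensorMul B γ ∘ₗ map ζ π ∘ₗ comul
      = mul' k H ∘ₗ map (B.val.toLinearMap ∘ₗ ζ) (γ ∘ₗ π) ∘ₗ comul := by
  rw [tensorMul, map_comp]
  rfl

variable [Coalgebra k C]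

theorem coinvariantPart_comp_of_convMap_eq {π : H →ₗ[k] C} {γ γbar : C →ₗ[k] H}
    (hγ : coaction π ∘ₗ γ = rTensor C γ ∘ₗ comul)
    (hinv : convMap k γ γbar = Algebra.linearMap k H ∘ₗ counit) :
    coinvariantPart π γbar ∘ₗ γ = Algebra.linearMap k H ∘ₗ counit := by
  rw [← hinv, coinvariantPart, comp_assoc, comp_assoc, hγ, convMap, ← lTensor_comp_rTensor]
  rfl

theorem decompose_mul_apply {B : Subalgebra k H} (hB : IsLeftCoideal B)
    {π : H →ₗ[k] C} (hπ : ∀ b ∈ B, ∀ y, π (b * y) = counit (R := k) b • π y)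
    {γ γbar : C →ₗ[k] H} (hγ : coaction π ∘ₗ γ = rTensor C γ ∘ₗ comul)
    (hinv : convMap k γ γbar = Algebra.linearMap k H ∘ₗ counit) {b : H} (hb : b ∈ B) (c : C) :
    decompose π γbar (b * γ c) = b ⊗ₜ c := by
  have hcomp : coinvariantPart π γbar ∘ₗ mulLeft k b ∘ₗ γ
      = toSpanSingleton k H b ∘ₗ counit := by
    ext c'
    rw [comp_apply, comp_apply, mulLeft_apply, coinvariantPart_mul_of_mem hB hπ γbar hb,
      ← comp_apply (coinvariantPart π γbar) γ, coinvariantPart_comp_of_convMap_eq hγ hinv]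
    simp [Algebra.algebraMap_eq_smul_one]
  calc decompose π γbar (b * γ c)
      = (rTensor C (coinvariantPart π γbar ∘ₗ mulLeft k b) ∘ₗ coaction π ∘ₗ γ) c := by
        simp only [decompose, comp_apply, coaction_mul_of_mem hB hπ hb, rTensor_comp]
    _ = rTensor C (toSpanSingleton k H b) (rTensor C counit (comul c)) := by
        rw [hγ, ← comp_assoc, ← rTensor_comp, comp_assoc, hcomp, rTensor_comp]
        rfl
    _ = b ⊗ₜ c := by simp [rTensor_counit_comul]

theorem decompose_comp_tensorMul {B : Subalgebra k H} (hB : IsLeftCoideal B)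
    {π : H →ₗ[k] C} (hπ : ∀ b ∈ B, ∀ y, π (b * y) = counit (R := k) b • π y)
    {γ γbar : C →ₗ[k] H} (hγ : coaction π ∘ₗ γ = rTensor C γ ∘ₗ comul)
    (hinv : convMap k γ γbar = Algebra.linearMap k H ∘ₗ counit) :
    decompose π γbar ∘ₗ tensorMul B γ = rTensor C B.val.toLinearMap := by
  ext b c
  simp [tensorMul, decompose_mul_apply hB hπ hγ hinv b.2]

theorem tensorMul_bijective [Module.Flat k C] {B : Subalgebra k H} (hB : IsLeftCoideal B)
    {π : H →ₗ[k] C} (hπ : ∀ b ∈ B, ∀ y, π (b * y) = counit (R := k) b • π y)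
    {ζ : H →ₗ[k] B} {γ γbar : C →ₗ[k] H} (hγ : coaction π ∘ₗ γ = rTensor C γ ∘ₗ comul)
    (hinv : convMap k γ γbar = Algebra.linearMap k H ∘ₗ counit)
    (hmain : mul' k H ∘ₗ map (B.val.toLinearMap ∘ₗ ζ) (γ ∘ₗ π) ∘ₗ comul = LinearMap.id) :
    Function.Bijective (tensorMul B γ) := by
  refine ⟨fun x y hxy => ?_, fun h => ⟨map ζ π (comul h), ?_⟩⟩
  · have hinj := Module.Flat.rTensor_preserves_injective_linearMap (M := C)
      B.val.toLinearMap Subtype.val_injective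
    rw [← decompose_comp_tensorMul hB hπ hγ hinv (γbar := γbar)] at hinj
    exact hinj (by simp only [comp_apply, hxy])
  · exact LinearMap.congr_fun ((tensorMul_comp_map_comul B ζ π γ).trans hmain) h

end LeftCoidealSubalgebra

theorem stmt13_general {k H C : Type*} [Field k] [Ring H] [HopfAlgebra k H]
    [AddCommGroup C] [Module k C] [Coalgebra k C]
    (B : Subalgebra k H)
    -- B is a left coideal subalgebra: Δ(B) ⊆ H ⊗ B
    (hB : ∀ b : B, Coalgebra.comul (b : H) ∈
      LinearMap.range (TensorProduct.map (LinearMap.id : H →ₗ[k] H) B.val.toLinearMap))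
    -- π : H → C = H/B⁺H, the quotient map of right H-module coalgebras
    (π : H →ₗ[k] C)
    (hπker : LinearMap.ker π = Submodule.span k
      {z : H | ∃ b ∈ B, ∃ h : H, Coalgebra.counit (R := k) b = 0 ∧ z = b * h})
    -- the partially admissible mapping system (ζ, γ*):
    (ζ : H →ₗ[k] B) (γ γbar : C →ₗ[k] H)
    -- γ is a biunitary right H/B⁺H-comodule map
    (hγcomod : (TensorProduct.map LinearMap.id π) ∘ₗ Coalgebra.comul ∘ₗ γ
      = (TensorProduct.map γ LinearMap.id) ∘ₗ Coalgebra.comul)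
    -- γ̄ is the convolution inverse of γ
    (hγinv₁ : convMap k γ γbar =
      (Algebra.linearMap k H) ∘ₗ (Coalgebra.counit : C →ₗ[k] k))
    -- (ι∘ζ) ∗ (γ∘π) = id_H
    (hmain : LinearMap.mul' k H ∘ₗ
        TensorProduct.map (B.val.toLinearMap ∘ₗ ζ) (γ ∘ₗ π) ∘ₗ Coalgebra.comul
      = LinearMap.id) :
    Module.finrank k H = Module.finrank k B * Module.finrank k C := by
  have hπ : ∀ b ∈ B, ∀ y, π (b * y) = Coalgebra.counit (R := k) b • π y := by
    refine fun b hb => LeftCoidealSubalgebra.map_mul_eq_counit_smul (fun b hb hε h => ?_) hb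
    rw [← LinearMap.mem_ker, hπker]
    exact Submodule.subset_span ⟨b, hb, h, hε, rfl⟩
  have hθ := LeftCoidealSubalgebra.tensorMul_bijective (fun b hb => hB ⟨b, hb⟩) hπ hγcomod hγinv₁ hmain
  rw [← (LinearEquiv.ofBijective _ hθ).finrank_eq, Module.finrank_tensorProduct]

theorem stmt13 {k H C : Type*} [Field k] [Ring H] [HopfAlgebra k H] [FiniteDimensional k H]
    [AddCommGroup C] [Module k C] [Coalgebra k C]
    (B : Subalgebra k H)
    -- B is a left coideal subalgebra: Δ(B) ⊆ H ⊗ B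
    (hB : ∀ b : B, Coalgebra.comul (b : H) ∈
      LinearMap.range (TensorProduct.map (LinearMap.id : H →ₗ[k] H) B.val.toLinearMap))
    -- π : H → C = H/B⁺H, the quotient map of right H-module coalgebras
    (π : H →ₗ[k] C) (hπsurj : Function.Surjective π)
    (hπcounit : (Coalgebra.counit : C →ₗ[k] k) ∘ₗ π = Coalgebra.counit)
    (hπcomul : Coalgebra.comul ∘ₗ π = (TensorProduct.map π π) ∘ₗ Coalgebra.comul)
    (hπker : LinearMap.ker π = Submodule.span k
      {z : H | ∃ b ∈ B, ∃ h : H, Coalgebra.counit (R := k) b = 0 ∧ z = b * h})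
    -- the right H-action ⊲ on C, for which π is a right H-module map
    (act : C ⊗[k] H →ₗ[k] C)
    (hact : ∀ a h : H, act (π a ⊗ₜ[k] h) = π (a * h))
    -- the partially admissible mapping system (ζ, γ*):
    (ζ ζbar : H →ₗ[k] B) (γ γbar : C →ₗ[k] H)
    -- ζ is a biunitary left B-module map
    (hζmod : ∀ (b : B) (h : H), ζ ((b : H) * h) = b * ζ h)
    (hζ1 : ζ 1 = 1)
    (hζε : ∀ h : H, Coalgebra.counit (R := k) ((ζ h : H)) = Coalgebra.counit (R := k) h)
    -- γ is a biunitary right H/B⁺H-comodule map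
    (hγcomod : (TensorProduct.map LinearMap.id π) ∘ₗ Coalgebra.comul ∘ₗ γ
      = (TensorProduct.map γ LinearMap.id) ∘ₗ Coalgebra.comul)
    (hγ1 : γ (π 1) = 1)
    (hγε : ∀ x : C, Coalgebra.counit (R := k) (γ x) = Coalgebra.counit (R := k) x)
    -- ζ̄ is the convolution inverse of ζ
    (hζinv₁ : convMap k ζ ζbar =
      (Algebra.linearMap k B) ∘ₗ (Coalgebra.counit : H →ₗ[k] k))
    (hζinv₂ : convMap k ζbar ζ =
      (Algebra.linearMap k B) ∘ₗ (Coalgebra.counit : H →ₗ[k] k))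
    -- γ̄ is the convolution inverse of γ
    (hγinv₁ : convMap k γ γbar =
      (Algebra.linearMap k H) ∘ₗ (Coalgebra.counit : C →ₗ[k] k))
    (hγinv₂ : convMap k γbar γ =
      (Algebra.linearMap k H) ∘ₗ (Coalgebra.counit : C →ₗ[k] k))
    -- (ι∘ζ) ∗ (γ∘π) = id_H
    (hmain : LinearMap.mul' k H ∘ₗ
        TensorProduct.map (B.val.toLinearMap ∘ₗ ζ) (γ ∘ₗ π) ∘ₗ Coalgebra.comul
      = LinearMap.id) :
    Module.finrank k H = Module.finrank k B * Module.finrank k C :=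
  stmt13_general B hB π hπker ζ γ γbar hγcomod hγinv₁ hmain
end

section
/- Let H be a finite-dimensional Hopf algebra, B a left coideal subalgebra, and (ζ, γ*) a partially admissible mapping system for the inclusion ι : B → H with quotient π : H → C = H/B⁺H. Then (γ*, ζ) is a partially admissible mapping system for the inclusion π* : C*^{op,cop} → H*^{op,cop}, where H*^{op,cop} denotes the Hopf algebra dual to H with both opposite multiplication and opposite comultiplication. -/
/-!
STATEMENT 14: Let H be a finite-dimensional Hopf algebra, B a left coideal subalgebra,
and (ζ, γ*) a partially admissible mapping system for the inclusion ι : B → H with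
quotient π : H → C = H/B⁺H.  Then (γ*, ζ) is a partially admissible mapping system
for the inclusion π* : C*^{op,cop} → H*^{op,cop}.

A partially admissible mapping system is encoded by the raw datum `PAMSData`
(all relevant structure maps, as linear maps) together with the predicate `IsPAMS`
(all the conditions of the definition; in the finite-dimensional situation the dual
forms of the conditions are equivalent to the primal ones).  The dual datum
`dualPAMSData`, built on the dual spaces C*, H*, B*, carries the structures of
H*^{op,cop} (opposite convolution multiplication, opposite dual comultiplication,
etc.), all obtained by dualization.
-/

open TensorProduct

section

variable {k B H C : Type*} [Field k]
  [AddCommGroup B] [Module k B] [AddCommGroup H] [Module k H] [AddCommGroup C] [Module k C]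

/-- The raw datum of a partially admissible mapping system
`B --ι--> H --π--> C` with cointegrals `ζ, γ` and their convolution inverses. -/
structure PAMSData (k B H C : Type*) [Field k]
    [AddCommGroup B] [Module k B] [AddCommGroup H] [Module k H]
    [AddCommGroup C] [Module k C] where
  /-- multiplication of the Hopf algebra `H` -/
  mulH : H ⊗[k] H →ₗ[k] H
  oneH : H
  comulH : H →ₗ[k] H ⊗[k] H
  counitH : H →ₗ[k] k
  /-- multiplication of the (coideal sub)algebra `B` -/
  mulB : B ⊗[k] B →ₗ[k] B
  oneB : B
  /-- comultiplication of the (quotient module) coalgebra `C` -/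
  comulC : C →ₗ[k] C ⊗[k] C
  counitC : C →ₗ[k] k
  /-- left `H`-comodule structure of `B` -/
  coactB : B →ₗ[k] H ⊗[k] B
  /-- right `H`-module structure of `C` -/
  actC : C ⊗[k] H →ₗ[k] C
  iota : B →ₗ[k] H
  pi : H →ₗ[k] C
  zeta : H →ₗ[k] B
  gamma : C →ₗ[k] H
  zetaBar : H →ₗ[k] B
  gammaBar : C →ₗ[k] H

/-- The conditions for `(ζ, γ*)` to be a partially admissible mapping system. -/
structure IsPAMS (D : PAMSData k B H C) : Prop where
  /-- ι is an injection of left H-comodule algebras -/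
  iota_inj : Function.Injective D.iota
  iota_mul : D.iota ∘ₗ D.mulB = D.mulH ∘ₗ TensorProduct.map D.iota D.iota
  iota_one : D.iota D.oneB = D.oneH
  coact_iota : TensorProduct.map LinearMap.id D.iota ∘ₗ D.coactB = D.comulH ∘ₗ D.iota
  /-- π is a surjection of right H-module coalgebras -/
  pi_surj : Function.Surjective D.pi
  pi_comul : D.comulC ∘ₗ D.pi = TensorProduct.map D.pi D.pi ∘ₗ D.comulH
  pi_counit : D.counitC ∘ₗ D.pi = D.counitH
  act_pi : D.actC ∘ₗ TensorProduct.map D.pi LinearMap.id = D.pi ∘ₗ D.mulH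
  /-- the image of ι is the space of coinvariants of the right C-comodule H -/
  coinv : LinearMap.range D.iota
    = LinearMap.ker (TensorProduct.map LinearMap.id D.pi ∘ₗ D.comulH
        - (TensorProduct.mk k H C).flip (D.pi D.oneH))
  /-- ζ is a left B-module map, γ a right C-comodule map -/
  zeta_mod : D.zeta ∘ₗ D.mulH ∘ₗ TensorProduct.map D.iota LinearMap.id
    = D.mulB ∘ₗ TensorProduct.map LinearMap.id D.zeta
  gamma_comod : TensorProduct.map LinearMap.id D.pi ∘ₗ D.comulH ∘ₗ D.gamma
    = TensorProduct.map D.gamma LinearMap.id ∘ₗ D.comulC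
  /-- ζ and γ are biunitary -/
  zeta_one : D.zeta D.oneH = D.oneB
  zeta_counit : D.counitH ∘ₗ D.iota ∘ₗ D.zeta = D.counitH
  gamma_one : D.gamma (D.pi D.oneH) = D.oneH
  gamma_counit : D.counitH ∘ₗ D.gamma = D.counitC
  /-- ζ̄ and γ̄ are the convolution inverses of ζ and γ -/
  zeta_conv₁ : D.mulB ∘ₗ TensorProduct.map D.zeta D.zetaBar ∘ₗ D.comulH
    = LinearMap.smulRight D.counitH D.oneB
  zeta_conv₂ : D.mulB ∘ₗ TensorProduct.map D.zetaBar D.zeta ∘ₗ D.comulH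
    = LinearMap.smulRight D.counitH D.oneB
  gamma_conv₁ : D.mulH ∘ₗ TensorProduct.map D.gamma D.gammaBar ∘ₗ D.comulC
    = LinearMap.smulRight D.counitC D.oneH
  gamma_conv₂ : D.mulH ∘ₗ TensorProduct.map D.gammaBar D.gamma ∘ₗ D.comulC
    = LinearMap.smulRight D.counitC D.oneH
  /-- (ι∘ζ) ∗ (γ∘π) = id_H -/
  conv_id : D.mulH ∘ₗ TensorProduct.map (D.iota ∘ₗ D.zeta) (D.gamma ∘ₗ D.pi) ∘ₗ D.comulH
    = LinearMap.id

/-- The dual partially admissible mapping system datum, for the inclusion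
`π* : C*^{op,cop} → H*^{op,cop}` with quotient `ι* : H*^{op,cop} → B*^{op,cop}`
and cointegrals `(γ*, ζ*)` (with convolution inverses `γ̄*, ζ̄*`). -/
noncomputable def dualPAMSData [FiniteDimensional k B] [FiniteDimensional k H]
    [FiniteDimensional k C] (D : PAMSData k B H C) :
    PAMSData k (Module.Dual k C) (Module.Dual k H) (Module.Dual k B) where
  -- opposite convolution multiplication of H*
  mulH := D.comulH.dualMap ∘ₗ TensorProduct.dualDistrib k H H ∘ₗ
    (TensorProduct.comm k (Module.Dual k H) (Module.Dual k H)).toLinearMap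
  oneH := D.counitH
  -- opposite of the comultiplication of H* dual to the multiplication of H
  comulH := (TensorProduct.comm k (Module.Dual k H) (Module.Dual k H)).toLinearMap ∘ₗ
    (TensorProduct.dualDistribEquiv k H H).symm.toLinearMap ∘ₗ D.mulH.dualMap
  counitH := Module.Dual.eval k H D.oneH
  -- opposite convolution multiplication of C* (the coideal subalgebra of H*^{op,cop})
  mulB := D.comulC.dualMap ∘ₗ TensorProduct.dualDistrib k C C ∘ₗ
    (TensorProduct.comm k (Module.Dual k C) (Module.Dual k C)).toLinearMap
  oneB := D.counitC
  -- opposite of the comultiplication of B* dual to the multiplication of B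
  comulC := (TensorProduct.comm k (Module.Dual k B) (Module.Dual k B)).toLinearMap ∘ₗ
    (TensorProduct.dualDistribEquiv k B B).symm.toLinearMap ∘ₗ D.mulB.dualMap
  counitC := Module.Dual.eval k B D.oneB
  -- left H*-comodule structure of C*, dual to the right H-action on C
  coactB := (TensorProduct.comm k (Module.Dual k C) (Module.Dual k H)).toLinearMap ∘ₗ
    (TensorProduct.dualDistribEquiv k C H).symm.toLinearMap ∘ₗ D.actC.dualMap
  -- right H*-module structure of B*, dual to the left H-coaction on B
  actC := D.coactB.dualMap ∘ₗ TensorProduct.dualDistrib k H B ∘ₗ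
    (TensorProduct.comm k (Module.Dual k B) (Module.Dual k H)).toLinearMap
  iota := D.pi.dualMap
  pi := D.iota.dualMap
  zeta := D.gamma.dualMap
  gamma := D.zeta.dualMap
  zetaBar := D.gammaBar.dualMap
  gammaBar := D.zetaBar.dualMap

end  -- close the variable section

/-!
The dual conditions are the transposes of the original ones, since dualization turns composites
around and, through `dualDistrib`, turns multiplications into comultiplications and actions into
coactions; the swaps built into `dualPAMSData` absorb the reversal of the order of tensor
factors. The only condition with content is the coinvariance of `π* : C* → H*`: it amounts to
`ker π = B⁺H`. One inclusion holds because `π(ι b) = ε(b) π(1)` for `b ∈ B` and `π` is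
`H`-linear; for the other, `h = ι(ζ h₁) γ(π h₂)` is congruent modulo `B⁺H` to
`ε(h₁) γ(π h₂) = γ(π h)`, which vanishes when `π h = 0`.
-/

section

open LinearMap

namespace LinearMap

variable {R M₁ M₂ M₃ : Type*} [CommSemiring R] [AddCommMonoid M₁] [Module R M₁]
  [AddCommMonoid M₂] [Module R M₂] [AddCommMonoid M₃] [Module R M₃]

theorem dualMap_dualMap_apply (f : M₁ →ₗ[R] M₂) (g : M₂ →ₗ[R] M₃)
    (φ : Module.Dual R M₃) :
    f.dualMap (g.dualMap φ) = (g ∘ₗ f).dualMap φ :=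
  rfl

theorem dualMap_smulRight (f : Module.Dual R M₁) (y : M₂) (φ : Module.Dual R M₂) :
    (smulRight f y).dualMap φ = φ y • f := by
  ext
  simp [mul_comm]

end LinearMap

namespace TensorProduct

variable {k M N M' N' : Type*} [Field k]
  [AddCommGroup M] [Module k M] [AddCommGroup N] [Module k N]
  [AddCommGroup M'] [Module k M'] [AddCommGroup N'] [Module k N']

theorem lid_map_apply (f : M →ₗ[k] k) (g : N →ₗ[k] N') (t : M ⊗[k] N) :
    TensorProduct.lid k N' (map f g t) = g (TensorProduct.lid k N (map f LinearMap.id t)) := by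
  induction t using TensorProduct.induction_on with
  | zero => simp
  | tmul m n => simp
  | add x y hx hy => simp only [map_add, hx, hy]

theorem dualDistrib_map_dualMap (f : M →ₗ[k] M') (g : N →ₗ[k] N')
    (x : Module.Dual k M' ⊗[k] Module.Dual k N') :
    dualDistrib k M N (map f.dualMap g.dualMap x) = (map f g).dualMap (dualDistrib k M' N' x) := by
  induction x using TensorProduct.induction_on with
  | zero => simp
  | tmul φ ψ => ext m n; simp [dualDistrib_apply]
  | add x y hx hy => simp only [map_add, hx, hy]

theorem dualDistrib_comm (x : Module.Dual k M ⊗[k] Module.Dual k N) :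
    dualDistrib k N M (TensorProduct.comm k _ _ x)
      = (TensorProduct.comm k N M).toLinearMap.dualMap (dualDistrib k M N x) := by
  ext z
  simp [← dualDistrib_apply_comm]

variable [FiniteDimensional k M] [FiniteDimensional k N]

theorem dualDistribEquiv_apply (x : Module.Dual k M ⊗[k] Module.Dual k N) :
    dualDistribEquiv k M N x = dualDistrib k M N x :=
  rfl

@[simp]
theorem dualDistrib_dualDistribEquiv_symm (F : Module.Dual k (M ⊗[k] N)) :
    dualDistrib k M N ((dualDistribEquiv k M N).symm F) = F :=
  (dualDistribEquiv k M N).apply_symm_apply F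

theorem map_dualMap_dualDistribEquiv_symm [FiniteDimensional k M'] [FiniteDimensional k N']
    (f : M →ₗ[k] M') (g : N →ₗ[k] N') (F : Module.Dual k (M' ⊗[k] N')) :
    map f.dualMap g.dualMap ((dualDistribEquiv k M' N').symm F)
      = (dualDistribEquiv k M N).symm ((map f g).dualMap F) := by
  rw [LinearEquiv.eq_symm_apply, dualDistribEquiv_apply, dualDistrib_map_dualMap,
    dualDistrib_dualDistribEquiv_symm]

theorem dualMap_convolution {X A : Type*} [AddCommGroup X] [Module k X] [AddCommGroup A]
    [Module k A] [FiniteDimensional k X] [FiniteDimensional k A] (m : A ⊗[k] A →ₗ[k] A)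
    (Δ : X →ₗ[k] X ⊗[k] X) (f g : X →ₗ[k] A) (φ : Module.Dual k A) :
    Δ.dualMap (dualDistrib k X X (TensorProduct.comm k _ _ (map f.dualMap g.dualMap
        (TensorProduct.comm k _ _ ((dualDistribEquiv k A A).symm (m.dualMap φ))))))
      = (m ∘ₗ map g f ∘ₗ Δ).dualMap φ := by
  rw [← map_comm, comm_comm, map_dualMap_dualDistribEquiv_symm,
    dualDistrib_dualDistribEquiv_symm, dualMap_dualMap_apply, dualMap_dualMap_apply]

end TensorProduct

variable {k B H C : Type*} [Field k]
  [AddCommGroup B] [Module k B] [AddCommGroup H] [Module k H] [AddCommGroup C] [Module k C]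

namespace PAMSData

/-- Its range is `B⁺H`. -/
def augmentedMul (D : PAMSData k B H C) : H ⊗[k] B →ₗ[k] H :=
  D.mulH ∘ₗ map D.iota LinearMap.id ∘ₗ (TensorProduct.comm k H B).toLinearMap
    - (TensorProduct.rid k H).toLinearMap ∘ₗ map LinearMap.id (D.counitH ∘ₗ D.iota)

@[simp]
theorem augmentedMul_tmul (D : PAMSData k B H C) (h : H) (b : B) :
    D.augmentedMul (h ⊗ₜ b) = D.mulH (D.iota b ⊗ₜ h) - D.counitH (D.iota b) • h := by
  simp [augmentedMul]

theorem dualMap_augmentedMul_apply [FiniteDimensional k H]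
    (D : PAMSData k B H C) (φ : Module.Dual k H) :
    D.augmentedMul.dualMap φ = dualDistrib k H B
      (map LinearMap.id D.iota.dualMap
          (TensorProduct.comm k _ _ ((dualDistribEquiv k H H).symm (D.mulH.dualMap φ)))
        - φ ⊗ₜ D.iota.dualMap D.counitH) := by
  refine TensorProduct.ext' fun h b => ?_
  simp only [map_sub, LinearMap.sub_apply, ← dualMap_id, dualDistrib_map_dualMap,
    dualDistrib_comm, dualDistrib_dualDistribEquiv_symm, dualMap_apply, map_tmul,
    LinearEquiv.coe_coe, comm_tmul, dualDistrib_apply, augmentedMul_tmul, map_smul,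
    smul_eq_mul, id_apply, mul_comm]

end PAMSData

namespace IsPAMS

variable {D : PAMSData k B H C}

theorem pi_iota (hD : IsPAMS D)
    (hcounit_comul : ∀ h, TensorProduct.lid k H (map D.counitH LinearMap.id (D.comulH h)) = h)
    (b : B) : D.pi (D.iota b) = D.counitH (D.iota b) • D.pi D.oneH := by
  have hcoinv : map LinearMap.id D.pi (D.comulH (D.iota b)) = D.iota b ⊗ₜ D.pi D.oneH := by
    have := hD.coinv ▸ LinearMap.mem_range_self D.iota b
    simpa [sub_eq_zero] using this
  calc D.pi (D.iota b)
      = TensorProduct.lid k C (map D.counitH D.pi (D.comulH (D.iota b))) := by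
        rw [lid_map_apply, hcounit_comul]
    _ = TensorProduct.lid k C
          (map D.counitH LinearMap.id (map LinearMap.id D.pi (D.comulH (D.iota b)))) := by
        rw [map_map, comp_id, id_comp]
    _ = D.counitH (D.iota b) • D.pi D.oneH := by simp [hcoinv]

theorem pi_augmentedMul (hD : IsPAMS D)
    (hcounit_comul : ∀ h, TensorProduct.lid k H (map D.counitH LinearMap.id (D.comulH h)) = h)
    (hone_mul : ∀ h, D.mulH (D.oneH ⊗ₜ h) = h) (t : H ⊗[k] B) :
    D.pi (D.augmentedMul t) = 0 := by
  induction t using TensorProduct.induction_on with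
  | zero => simp
  | tmul h b =>
    have hact (x : H) : D.pi (D.mulH (x ⊗ₜ h)) = D.actC (D.pi x ⊗ₜ h) :=
      (LinearMap.congr_fun hD.act_pi (x ⊗ₜ h)).symm
    rw [D.augmentedMul_tmul, map_sub, map_smul, hact, hD.pi_iota hcounit_comul, ← smul_tmul',
      map_smul, ← hact, hone_mul, sub_self]
  | add x y hx hy => rw [map_add, map_add, hx, hy, add_zero]

theorem mem_range_augmentedMul (hD : IsPAMS D)
    (hcounit_comul : ∀ h, TensorProduct.lid k H (map D.counitH LinearMap.id (D.comulH h)) = h)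
    {x : H} (hx : D.pi x = 0) : x ∈ LinearMap.range D.augmentedMul := by
  have hconv (t : H ⊗[k] H) :
      D.mulH (map (D.iota ∘ₗ D.zeta) (D.gamma ∘ₗ D.pi) t)
        = TensorProduct.lid k H (map D.counitH (D.gamma ∘ₗ D.pi) t)
          + D.augmentedMul (map (D.gamma ∘ₗ D.pi) D.zeta (TensorProduct.comm k H H t)) := by
    induction t using TensorProduct.induction_on with
    | zero => simp
    | tmul a b =>
      have hζ := LinearMap.congr_fun hD.zeta_counit a
      simp only [comp_apply] at hζ
      simp [hζ]
    | add s t hs ht => simp only [map_add, hs, ht]; abel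
  have hx' := LinearMap.congr_fun hD.conv_id x
  rw [comp_apply, comp_apply, hconv, lid_map_apply, hcounit_comul, comp_apply, hx, map_zero,
    zero_add, LinearMap.id_apply] at hx'
  exact hx' ▸ LinearMap.mem_range_self _ _

theorem ker_pi (hD : IsPAMS D)
    (hcounit_comul : ∀ h, TensorProduct.lid k H (map D.counitH LinearMap.id (D.comulH h)) = h)
    (hone_mul : ∀ h, D.mulH (D.oneH ⊗ₜ h) = h) :
    LinearMap.ker D.pi = LinearMap.range D.augmentedMul :=
  le_antisymm (fun _ hx => hD.mem_range_augmentedMul hcounit_comul hx)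
    (LinearMap.range_le_ker_iff.mpr (LinearMap.ext (hD.pi_augmentedMul hcounit_comul hone_mul)))

theorem range_dualMap_pi (hD : IsPAMS D)
    (hcounit_comul : ∀ h, TensorProduct.lid k H (map D.counitH LinearMap.id (D.comulH h)) = h)
    (hone_mul : ∀ h, D.mulH (D.oneH ⊗ₜ h) = h) :
    LinearMap.range D.pi.dualMap = LinearMap.ker D.augmentedMul.dualMap := by
  rw [ker_dualMap_eq_dualAnnihilator_range, ← hD.ker_pi hcounit_comul hone_mul]
  exact range_dualMap_eq_dualAnnihilator_ker D.pi

theorem dual [FiniteDimensional k B] [FiniteDimensional k H] [FiniteDimensional k C]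
    (hD : IsPAMS D)
    (hcounit_comul : ∀ h, TensorProduct.lid k H (map D.counitH LinearMap.id (D.comulH h)) = h)
    (hone_mul : ∀ h, D.mulH (D.oneH ⊗ₜ h) = h) :
    IsPAMS (dualPAMSData D) where
  iota_inj := dualMap_injective_iff.mpr hD.pi_surj
  iota_mul := LinearMap.ext fun x => by
    simp only [dualPAMSData, comp_apply, LinearEquiv.coe_coe, ← map_comm,
      dualDistrib_map_dualMap, dualDistrib_comm, dualMap_dualMap_apply, comp_assoc, hD.pi_comul]
  iota_one := hD.pi_counit
  coact_iota := LinearMap.ext fun x => by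
    simp only [dualPAMSData, comp_apply, LinearEquiv.coe_coe, map_comm, ← dualMap_id,
      map_dualMap_dualDistribEquiv_symm, dualMap_dualMap_apply, comp_assoc, hD.act_pi]
  pi_surj := dualMap_surjective_of_injective hD.iota_inj
  pi_comul := LinearMap.ext fun x => by
    simp only [dualPAMSData, comp_apply, LinearEquiv.coe_coe, map_comm,
      map_dualMap_dualDistribEquiv_symm, dualMap_dualMap_apply, comp_assoc, hD.iota_mul]
  pi_counit := LinearMap.ext fun φ => congrArg φ hD.iota_one
  act_pi := LinearMap.ext fun x => by
    simp only [dualPAMSData, comp_apply, LinearEquiv.coe_coe, ← map_comm, ← dualMap_id,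
      dualDistrib_map_dualMap, dualDistrib_comm, dualMap_dualMap_apply, comp_assoc, hD.coact_iota]
  coinv := by
    refine (hD.range_dualMap_pi hcounit_comul hone_mul).trans (Submodule.ext fun φ => ?_)
    rw [mem_ker, mem_ker, D.dualMap_augmentedMul_apply, ← dualDistribEquiv_apply,
      LinearEquiv.map_eq_zero_iff]
    rfl
  zeta_mod := LinearMap.ext fun x => by
    simp only [dualPAMSData, comp_apply, LinearEquiv.coe_coe, ← map_comm, ← dualMap_id,
      dualDistrib_map_dualMap, dualDistrib_comm, dualMap_dualMap_apply, comp_assoc,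
      hD.gamma_comod]
  gamma_comod := LinearMap.ext fun x => by
    simp only [dualPAMSData, comp_apply, LinearEquiv.coe_coe, map_comm, ← dualMap_id,
      map_dualMap_dualDistribEquiv_symm, dualMap_dualMap_apply, comp_assoc, hD.zeta_mod]
  zeta_one := hD.gamma_counit
  zeta_counit := LinearMap.ext fun φ => congrArg φ hD.gamma_one
  gamma_one := hD.zeta_counit
  gamma_counit := LinearMap.ext fun φ => congrArg φ hD.zeta_one
  zeta_conv₁ := LinearMap.ext fun φ => (dualMap_convolution _ _ _ _ φ).trans <| by
    rw [hD.gamma_conv₂, dualMap_smulRight]; rfl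
  zeta_conv₂ := LinearMap.ext fun φ => (dualMap_convolution _ _ _ _ φ).trans <| by
    rw [hD.gamma_conv₁, dualMap_smulRight]; rfl
  gamma_conv₁ := LinearMap.ext fun φ => (dualMap_convolution _ _ _ _ φ).trans <| by
    rw [hD.zeta_conv₂, dualMap_smulRight]; rfl
  gamma_conv₂ := LinearMap.ext fun φ => (dualMap_convolution _ _ _ _ φ).trans <| by
    rw [hD.zeta_conv₁, dualMap_smulRight]; rfl
  conv_id := LinearMap.ext fun φ => by
    simp only [dualPAMSData, comp_apply, LinearEquiv.coe_coe, dualMap_comp_dualMap,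
      dualMap_convolution, hD.conv_id, dualMap_id]

end IsPAMS

end

theorem stmt14 {k B H C : Type*} [Field k] [Ring H] [HopfAlgebra k H]
    [AddCommGroup B] [Module k B] [AddCommGroup C] [Module k C]
    [FiniteDimensional k B] [FiniteDimensional k H] [FiniteDimensional k C]
    (D : PAMSData k B H C)
    -- H is a Hopf algebra: the structure maps of D on H are those of the
    -- Hopf algebra H
    (hmul : D.mulH = LinearMap.mul' k H) (hone : D.oneH = 1)
    (hcomul : D.comulH = Coalgebra.comul) (hcounit : D.counitH = Coalgebra.counit)
    (hD : IsPAMS D) :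
    IsPAMS (dualPAMSData D) := by
  refine hD.dual (fun h => ?_) (fun h => by simp [hmul, hone])
  rw [hcomul, hcounit]
  exact (congrArg (TensorProduct.lid k H) (Coalgebra.rTensor_counit_comul h)).trans (by simp)
end

section
/- Let (ζ, γ*) be a partially admissible mapping system for B ⊆ H. Then for all h* ∈ H* and b* ∈ B*: Σ ζ*(h*₍₁₎ ▷ b*₍₁₎) · π*(γ*(h*₍₂₎ · ζ*(b*₍₂₎))) = h* · ζ*(b*), where ▷ denotes the left H*-action on B* induced by ι* (i.e. h* ▷ ι*(k*) = ι*(h* k*)) and b* ↦ Σ b*₍₁₎ ⊗ b*₍₂₎ is the left B*-comodule structure of B*. -/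
/-!
STATEMENT 15: Let (ζ, γ*) be a partially admissible mapping system for B ⊆ H
(H a finite-dimensional Hopf algebra).  Then for all h* ∈ H* and b* ∈ B*:
  Σ ζ*(h*₍₁₎ ▷ b*₍₁₎) · π*(γ*(h*₍₂₎ · ζ*(b*₍₂₎)))  =  h* · ζ*(b*)   in H*,
where ▷ is the left H*-action on B* induced by ι* (h* ▷ b* = ι*(h*·ζ*(b*))), and
b* ↦ Σ b*₍₁₎ ⊗ b*₍₂₎ is the (left B*-comodule) comultiplication of B*.

The quotient H/B⁺H is modelled by the coalgebra C.  All dual structures are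
unfolded via their definitions (ζ* = ζᵀ, γ* = γᵀ, π* = πᵀ, ι* = ιᵀ; products in
H* are convolutions with respect to Δ_H, Δ_{H*} is dual to the multiplication of H,
Δ_{B*} dual to the multiplication of B).  Evaluating both sides at y ∈ H, the
identity reads (with z := ι(ζ(y₍₁₎)) and w := γ(π(y₍₂₎))):
  Σ h*( z₍₁₎·w₍₁₎ ) · b*( ζ(z₍₂₎)·ζ(w₍₂₎) )  =  Σ h*(y₍₁₎) · b*(ζ(y₍₂₎)),
which is the displayed equality of linear functionals on H below.
-/

open TensorProduct

/-!
Evaluated at `y ∈ H`, with `z = ι ζ(y₁)` and `w = γ π(y₂)`, the left side is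
`Σ u(z₁ w₁) bs(ζ(z₂) ζ(w₂))`. As `B` is a left coideal, `z₁ ⊗ z₂ ∈ H ⊗ B`, and the left
`B`-linearity of `ζ` (with `ζ|_B = id`) gives `ζ(z₂) ζ(w₂) = ζ(z₂ w₂)`. So the summand is
`(u ⊗ bs ∘ ζ)(Δ(z w))`, and `Σ z w = y` because `(ι ∘ ζ) ∗ (γ ∘ π) = id`.
-/

open TensorProduct

section

variable {k H : Type*} [CommSemiring k] [Semiring H] [Algebra k H] {B : Subalgebra k H}
  {ζ : H →ₗ[k] B}

theorem apply_coe_of_left_module_map (hζmod : ∀ (b : B) (h : H), ζ ((b : H) * h) = b * ζ h)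
    (hζ1 : ζ 1 = 1) (b : B) : ζ b = b := by
  rw [← mul_one (b : H), hζmod, hζ1, mul_one]

theorem map_mul_tensorTensorTensorComm_map_val
    (hζmod : ∀ (b : B) (h : H), ζ ((b : H) * h) = b * ζ h) (hζ1 : ζ 1 = 1)
    (t : H ⊗[k] B) (v : H ⊗[k] H) :
    map (LinearMap.mul' k H) (LinearMap.mul' k B ∘ₗ map ζ ζ)
        (tensorTensorTensorComm k H H H H (map LinearMap.id B.val.toLinearMap t ⊗ₜ v))
      = map LinearMap.id ζ (map LinearMap.id B.val.toLinearMap t * v) := by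
  induction t using TensorProduct.induction_on with
  | zero => simp
  | add s₁ s₂ ih₁ ih₂ => simp only [map_add, add_tmul, add_mul, ih₁, ih₂]
  | tmul a c =>
    induction v using TensorProduct.induction_on with
    | zero => simp
    | add v₁ v₂ ih₁ ih₂ => simp only [map_add, tmul_add, mul_add, ih₁, ih₂]
    | tmul x z => simp [apply_coe_of_left_module_map hζmod hζ1, hζmod]

end

theorem map_mul_tensorTensorTensorComm_comul {k H : Type*} [CommSemiring k] [Semiring H]
    [Bialgebra k H] {B : Subalgebra k H} {ζ : H →ₗ[k] B}
    (hB : ∀ b : B, Coalgebra.comul (b : H) ∈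
      LinearMap.range (TensorProduct.map (LinearMap.id : H →ₗ[k] H) B.val.toLinearMap))
    (hζmod : ∀ (b : B) (h : H), ζ ((b : H) * h) = b * ζ h) (hζ1 : ζ 1 = 1) (b : B) (y : H) :
    map (LinearMap.mul' k H) (LinearMap.mul' k B ∘ₗ map ζ ζ)
        (tensorTensorTensorComm k H H H H (Coalgebra.comul (b : H) ⊗ₜ Coalgebra.comul y))
      = map LinearMap.id ζ (Coalgebra.comul ((b : H) * y)) := by
  obtain ⟨t, ht⟩ := hB b
  rw [Bialgebra.comul_mul, ← ht, map_mul_tensorTensorTensorComm_map_val hζmod hζ1]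

theorem stmt15_general {k H C : Type*} [Field k] [Ring H] [HopfAlgebra k H]
    [AddCommGroup C] [Module k C]
    (B : Subalgebra k H)
    -- B is a left coideal subalgebra: Δ(B) ⊆ H ⊗ B
    (hB : ∀ b : B, Coalgebra.comul (b : H) ∈
      LinearMap.range (TensorProduct.map (LinearMap.id : H →ₗ[k] H) B.val.toLinearMap))
    -- π : H → C = H/B⁺H, the quotient map of right H-module coalgebras
    (π : H →ₗ[k] C)
    -- the partially admissible mapping system (ζ, γ*):
    (ζ : H →ₗ[k] B) (γ : C →ₗ[k] H)
    -- ζ is a biunitary left B-module map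
    (hζmod : ∀ (b : B) (h : H), ζ ((b : H) * h) = b * ζ h)
    (hζ1 : ζ 1 = 1)
    -- (ι∘ζ) ∗ (γ∘π) = id_H
    (hmain : LinearMap.mul' k H ∘ₗ
        TensorProduct.map (B.val.toLinearMap ∘ₗ ζ) (γ ∘ₗ π) ∘ₗ Coalgebra.comul
      = LinearMap.id) :
    ∀ (u : Module.Dual k H) (bs : Module.Dual k B),
      LinearMap.mul' k k ∘ₗ
        TensorProduct.map (u ∘ₗ LinearMap.mul' k H)
          (bs ∘ₗ LinearMap.mul' k B ∘ₗ TensorProduct.map ζ ζ) ∘ₗ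
        (TensorProduct.tensorTensorTensorComm k H H H H).toLinearMap ∘ₗ
        TensorProduct.map (Coalgebra.comul : H →ₗ[k] H ⊗[k] H) Coalgebra.comul ∘ₗ
        TensorProduct.map (B.val.toLinearMap ∘ₗ ζ) (γ ∘ₗ π) ∘ₗ
        (Coalgebra.comul : H →ₗ[k] H ⊗[k] H)
      = LinearMap.mul' k k ∘ₗ TensorProduct.map u (bs ∘ₗ ζ) ∘ₗ
          (Coalgebra.comul : H →ₗ[k] H ⊗[k] H) := by
  intro u bs
  have hcomp : map (LinearMap.mul' k H) (LinearMap.mul' k B ∘ₗ map ζ ζ) ∘ₗ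
        (tensorTensorTensorComm k H H H H).toLinearMap ∘ₗ
        map (Coalgebra.comul : H →ₗ[k] H ⊗[k] H) Coalgebra.comul ∘ₗ
        map (B.val.toLinearMap ∘ₗ ζ) (γ ∘ₗ π)
      = map LinearMap.id ζ ∘ₗ Coalgebra.comul ∘ₗ LinearMap.mul' k H ∘ₗ
          map (B.val.toLinearMap ∘ₗ ζ) (γ ∘ₗ π) :=
    TensorProduct.ext' fun x y => by
      simpa using map_mul_tensorTensorTensorComm_comul hB hζmod hζ1 (ζ x) (γ (π y))
  calc _ = LinearMap.mul' k k ∘ₗ map u bs ∘ₗ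
          (map (LinearMap.mul' k H) (LinearMap.mul' k B ∘ₗ map ζ ζ) ∘ₗ
            (tensorTensorTensorComm k H H H H).toLinearMap ∘ₗ
            map (Coalgebra.comul : H →ₗ[k] H ⊗[k] H) Coalgebra.comul ∘ₗ
            map (B.val.toLinearMap ∘ₗ ζ) (γ ∘ₗ π)) ∘ₗ Coalgebra.comul := by
        simp only [map_comp, LinearMap.comp_assoc]
    _ = LinearMap.mul' k k ∘ₗ map u bs ∘ₗ map LinearMap.id ζ ∘ₗ Coalgebra.comul ∘ₗ
          (LinearMap.mul' k H ∘ₗ map (B.val.toLinearMap ∘ₗ ζ) (γ ∘ₗ π) ∘ₗ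
            Coalgebra.comul) := by
        rw [hcomp]; simp only [LinearMap.comp_assoc]
    _ = _ := by
        rw [hmain, LinearMap.comp_id, ← LinearMap.comp_assoc (Coalgebra.comul), ← map_comp,
          LinearMap.comp_id]

theorem stmt15 {k H C : Type*} [Field k] [Ring H] [HopfAlgebra k H] [FiniteDimensional k H]
    [AddCommGroup C] [Module k C] [Coalgebra k C]
    (B : Subalgebra k H)
    -- B is a left coideal subalgebra: Δ(B) ⊆ H ⊗ B
    (hB : ∀ b : B, Coalgebra.comul (b : H) ∈
      LinearMap.range (TensorProduct.map (LinearMap.id : H →ₗ[k] H) B.val.toLinearMap))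
    -- π : H → C = H/B⁺H, the quotient map of right H-module coalgebras
    (π : H →ₗ[k] C) (hπsurj : Function.Surjective π)
    (hπcounit : (Coalgebra.counit : C →ₗ[k] k) ∘ₗ π = Coalgebra.counit)
    (hπcomul : Coalgebra.comul ∘ₗ π = (TensorProduct.map π π) ∘ₗ Coalgebra.comul)
    (hπker : LinearMap.ker π = Submodule.span k
      {z : H | ∃ b ∈ B, ∃ h : H, Coalgebra.counit (R := k) b = 0 ∧ z = b * h})
    -- the right H-action ⊲ on C, for which π is a right H-module map
    (act : C ⊗[k] H →ₗ[k] C)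
    (hact : ∀ a h : H, act (π a ⊗ₜ[k] h) = π (a * h))
    -- the partially admissible mapping system (ζ, γ*):
    (ζ ζbar : H →ₗ[k] B) (γ γbar : C →ₗ[k] H)
    -- ζ is a biunitary left B-module map
    (hζmod : ∀ (b : B) (h : H), ζ ((b : H) * h) = b * ζ h)
    (hζ1 : ζ 1 = 1)
    (hζε : ∀ h : H, Coalgebra.counit (R := k) ((ζ h : H)) = Coalgebra.counit (R := k) h)
    -- γ is a biunitary right H/B⁺H-comodule map
    (hγcomod : (TensorProduct.map LinearMap.id π) ∘ₗ Coalgebra.comul ∘ₗ γ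
      = (TensorProduct.map γ LinearMap.id) ∘ₗ Coalgebra.comul)
    (hγ1 : γ (π 1) = 1)
    (hγε : ∀ x : C, Coalgebra.counit (R := k) (γ x) = Coalgebra.counit (R := k) x)
    -- ζ̄ is the convolution inverse of ζ
    (hζinv₁ : convMap k ζ ζbar =
      (Algebra.linearMap k B) ∘ₗ (Coalgebra.counit : H →ₗ[k] k))
    (hζinv₂ : convMap k ζbar ζ =
      (Algebra.linearMap k B) ∘ₗ (Coalgebra.counit : H →ₗ[k] k))
    -- γ̄ is the convolution inverse of γ
    (hγinv₁ : convMap k γ γbar =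
      (Algebra.linearMap k H) ∘ₗ (Coalgebra.counit : C →ₗ[k] k))
    (hγinv₂ : convMap k γbar γ =
      (Algebra.linearMap k H) ∘ₗ (Coalgebra.counit : C →ₗ[k] k))
    -- (ι∘ζ) ∗ (γ∘π) = id_H
    (hmain : LinearMap.mul' k H ∘ₗ
        TensorProduct.map (B.val.toLinearMap ∘ₗ ζ) (γ ∘ₗ π) ∘ₗ Coalgebra.comul
      = LinearMap.id) :
    ∀ (u : Module.Dual k H) (bs : Module.Dual k B),
      LinearMap.mul' k k ∘ₗ
        TensorProduct.map (u ∘ₗ LinearMap.mul' k H)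
          (bs ∘ₗ LinearMap.mul' k B ∘ₗ TensorProduct.map ζ ζ) ∘ₗ
        (TensorProduct.tensorTensorTensorComm k H H H H).toLinearMap ∘ₗ
        TensorProduct.map (Coalgebra.comul : H →ₗ[k] H ⊗[k] H) Coalgebra.comul ∘ₗ
        TensorProduct.map (B.val.toLinearMap ∘ₗ ζ) (γ ∘ₗ π) ∘ₗ
        (Coalgebra.comul : H →ₗ[k] H ⊗[k] H)
      = LinearMap.mul' k k ∘ₗ TensorProduct.map u (bs ∘ₗ ζ) ∘ₗ
          (Coalgebra.comul : H →ₗ[k] H ⊗[k] H) :=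
  stmt15_general B hB π ζ γ hζmod hζ1 hmain
end

section
/- Let (ζ, γ*) be a partially admissible mapping system for B ⊆ H. Then for all k*, h* ∈ H* and b* ∈ B*: Σ γ*(k* · ζ*(h*₍₁₎ ▷ b*₍₁₎)) · γ*(h*₍₂₎ · ζ*(b*₍₂₎)) = γ*(k* h* ζ*(b*)) in (H/B⁺H)*. -/
/-!
Write `Φ = (id ⊗ ζ) ∘ Δ : H → H ⊗ B`. Since `Δ(B) ⊆ H ⊗ B` and `ζ` is left `B`-linear with
`ζ 1 = 1`, we get `Φ (b h) = Φ b * Φ h` in the algebra `H ⊗ B` for `b ∈ B`; applying `Φ` to the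
factorisation `h = Σ ζ(h₁) γ(π h₂)` therefore gives `Φ h = Σ Φ(ζ h₁) Φ(γ(π h₂))`. Pairing with
`h* ⊗ b*` turns this into the identity for the last two factors. The comodule property of `γ`
rewrites `γ(x₁) ⊗ γ(x₂)` as `w₁ ⊗ γ(π w₂)` with `w = γ x`, and coassociativity then reduces the
theorem to that identity.
-/

open TensorProduct

section Subalgebra

variable {R A M : Type*} [CommSemiring R] [Semiring A] [Algebra R A] [Semiring M] [Algebra R M]
  {B : Subalgebra R A} {ζ : A →ₗ[R] B}

lemma lTensor_lTensor_val_mul (hζmod : ∀ (b : B) (a : A), ζ ((b : A) * a) = b * ζ a)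
    (t : M ⊗[R] B) (s : M ⊗[R] A) :
    ζ.lTensor M (B.val.toLinearMap.lTensor M t * s) = t * ζ.lTensor M s := by
  induction t using TensorProduct.induction_on with
  | zero => simp
  | add t₁ t₂ ih₁ ih₂ => simp only [map_add, add_mul, ih₁, ih₂]
  | tmul m b =>
    induction s using TensorProduct.induction_on with
    | zero => simp
    | add s₁ s₂ ih₁ ih₂ => simp only [map_add, mul_add, ih₁, ih₂]
    | tmul m' a => simp [hζmod]

lemma lTensor_lTensor_val (hζmod : ∀ (b : B) (a : A), ζ ((b : A) * a) = b * ζ a)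
    (hζ1 : ζ 1 = 1) (t : M ⊗[R] B) : ζ.lTensor M (B.val.toLinearMap.lTensor M t) = t := by
  have := lTensor_lTensor_val_mul hζmod t 1
  rwa [mul_one, Algebra.TensorProduct.one_def, LinearMap.lTensor_tmul, hζ1,
    ← Algebra.TensorProduct.one_def, mul_one] at this

end Subalgebra

section CoidealSubalgebra

variable {k H : Type*} [CommSemiring k] [Semiring H] [Bialgebra k H] {B : Subalgebra k H}
  {ζ : H →ₗ[k] B}

lemma lTensor_comul_mul
    (hB : ∀ b : B, Coalgebra.comul (b : H) ∈ LinearMap.range (B.val.toLinearMap.lTensor H))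
    (hζmod : ∀ (b : B) (h : H), ζ ((b : H) * h) = b * ζ h) (hζ1 : ζ 1 = 1)
    (b : B) (c : H) :
    ζ.lTensor H (Coalgebra.comul ((b : H) * c)) =
      ζ.lTensor H (Coalgebra.comul (b : H)) * ζ.lTensor H (Coalgebra.comul c) := by
  obtain ⟨t, ht⟩ := hB b
  rw [Bialgebra.comul_mul, ← ht, lTensor_lTensor_val hζmod hζ1]
  exact lTensor_lTensor_val_mul hζmod t _

lemma mul'_map_lTensor_comul_comp_comul
    (hB : ∀ b : B, Coalgebra.comul (b : H) ∈ LinearMap.range (B.val.toLinearMap.lTensor H))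
    (hζmod : ∀ (b : B) (h : H), ζ ((b : H) * h) = b * ζ h) (hζ1 : ζ 1 = 1)
    {g : H →ₗ[k] H}
    (hg : LinearMap.mul' k H ∘ₗ map (B.val.toLinearMap ∘ₗ ζ) g ∘ₗ Coalgebra.comul = .id) :
    LinearMap.mul' k (H ⊗[k] B) ∘ₗ
        map (ζ.lTensor H ∘ₗ Coalgebra.comul ∘ₗ B.val.toLinearMap ∘ₗ ζ)
          (ζ.lTensor H ∘ₗ Coalgebra.comul ∘ₗ g) ∘ₗ Coalgebra.comul =
      ζ.lTensor H ∘ₗ Coalgebra.comul := by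
  have hmul : LinearMap.mul' k (H ⊗[k] B) ∘ₗ
      map (ζ.lTensor H ∘ₗ Coalgebra.comul ∘ₗ B.val.toLinearMap) (ζ.lTensor H ∘ₗ Coalgebra.comul) =
      ζ.lTensor H ∘ₗ Coalgebra.comul ∘ₗ LinearMap.mul' k H ∘ₗ map B.val.toLinearMap .id := by
    ext b c
    exact (lTensor_comul_mul hB hζmod hζ1 b c).symm
  calc _ = (LinearMap.mul' k (H ⊗[k] B) ∘ₗ
      map (ζ.lTensor H ∘ₗ Coalgebra.comul ∘ₗ B.val.toLinearMap) (ζ.lTensor H ∘ₗ Coalgebra.comul))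
        ∘ₗ map ζ g ∘ₗ Coalgebra.comul := by
          simp only [coassoc_simps]
    _ = ζ.lTensor H ∘ₗ Coalgebra.comul ∘ₗ
        (LinearMap.mul' k H ∘ₗ map (B.val.toLinearMap ∘ₗ ζ) g ∘ₗ Coalgebra.comul) := by
          rw [hmul]
          simp only [coassoc_simps]
    _ = _ := by rw [hg, LinearMap.comp_id]

end CoidealSubalgebra

lemma mul'_comp_map_comp_tensorTensorTensorComm {R A M B : Type*} [CommSemiring R] [Semiring A]
    [Algebra R A] [AddCommMonoid M] [Module R M] [Semiring B] [Algebra R B]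
    (u : A →ₗ[R] R) (β : B →ₗ[R] R) (f : M →ₗ[R] B) :
    LinearMap.mul' R R ∘ₗ map (u ∘ₗ LinearMap.mul' R A) (β ∘ₗ LinearMap.mul' R B ∘ₗ map f f) ∘ₗ
        (tensorTensorTensorComm R A M A M).toLinearMap =
      (LinearMap.mul' R R ∘ₗ map u β) ∘ₗ LinearMap.mul' R (A ⊗[R] B) ∘ₗ
        map (f.lTensor A) (f.lTensor A) := by
  ext
  simp

section Coalgebra

variable {k C H X Y : Type*} [CommSemiring k] [AddCommMonoid C] [Module k C] [Coalgebra k C]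
  [AddCommMonoid H] [Module k H] [Coalgebra k H]
  [AddCommMonoid X] [Module k X] [AddCommMonoid Y] [Module k Y]

lemma map_comp_comul_of_comodule {γ : C →ₗ[k] H} {π : H →ₗ[k] C}
    (hγ : π.lTensor H ∘ₗ Coalgebra.comul ∘ₗ γ = γ.rTensor C ∘ₗ Coalgebra.comul)
    (F : H →ₗ[k] X) (G : H →ₗ[k] Y) :
    map (F ∘ₗ γ) (G ∘ₗ γ) ∘ₗ Coalgebra.comul = map F (G ∘ₗ γ ∘ₗ π) ∘ₗ Coalgebra.comul ∘ₗ γ :=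
  calc _ = (map F G ∘ₗ (γ.lTensor H ∘ₗ γ.rTensor C)) ∘ₗ Coalgebra.comul := by
          rw [LinearMap.lTensor_comp_rTensor, ← map_comp]
    _ = map F G ∘ₗ γ.lTensor H ∘ₗ (π.lTensor H ∘ₗ Coalgebra.comul ∘ₗ γ) := by
          rw [hγ]
          rfl
    _ = (map F G ∘ₗ (γ ∘ₗ π).lTensor H) ∘ₗ Coalgebra.comul ∘ₗ γ := by
          rw [LinearMap.lTensor_comp]
          rfl
    _ = _ := by rw [LinearMap.map_comp_lTensor]

lemma assoc_map_lTensor_comp_comul (F : H →ₗ[k] X) (G : H →ₗ[k] Y) :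
    (TensorProduct.assoc k H X Y).toLinearMap ∘ₗ
        map (F.lTensor H ∘ₗ Coalgebra.comul) G ∘ₗ Coalgebra.comul =
      (map F G ∘ₗ Coalgebra.comul).lTensor H ∘ₗ Coalgebra.comul :=
  calc _ = (TensorProduct.assoc k H X Y).toLinearMap ∘ₗ
        (map (F.lTensor H) G ∘ₗ (Coalgebra.comul (R := k) (A := H)).rTensor H) ∘ₗ
          Coalgebra.comul := by
          rw [LinearMap.map_comp_rTensor]
    _ = (map .id (map F G) ∘ₗ (TensorProduct.assoc k H H H).toLinearMap) ∘ₗ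
        (Coalgebra.comul (R := k) (A := H)).rTensor H ∘ₗ Coalgebra.comul := by
          rw [map_map_comp_assoc_eq]
          rfl
    _ = _ := by
          rw [LinearMap.comp_assoc, Coalgebra.coassoc, LinearMap.lTensor_comp]
          rfl

lemma map_comp_assoc_comp_map_comp_comul_of_comodule {K W : Type*} [AddCommMonoid K]
    [Module k K] [AddCommMonoid W] [Module k W] {γ : C →ₗ[k] H} {π : H →ₗ[k] C}
    (hγ : π.lTensor H ∘ₗ Coalgebra.comul ∘ₗ γ = γ.rTensor C ∘ₗ Coalgebra.comul)
    (κ : H →ₗ[k] K) (P : X ⊗[k] Y →ₗ[k] W) (F : H →ₗ[k] X) (G : H →ₗ[k] Y) :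
    map κ P ∘ₗ (TensorProduct.assoc k H X Y).toLinearMap ∘ₗ
        map (map .id F ∘ₗ Coalgebra.comul ∘ₗ γ) (G ∘ₗ γ) ∘ₗ Coalgebra.comul =
      map κ (P ∘ₗ map F (G ∘ₗ γ ∘ₗ π) ∘ₗ Coalgebra.comul) ∘ₗ Coalgebra.comul ∘ₗ γ :=
  calc _ = map κ P ∘ₗ ((TensorProduct.assoc k H X Y).toLinearMap ∘ₗ
        map ((F.lTensor H ∘ₗ Coalgebra.comul) ∘ₗ γ) (G ∘ₗ γ) ∘ₗ Coalgebra.comul) := rfl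
    _ = map κ P ∘ₗ ((TensorProduct.assoc k H X Y).toLinearMap ∘ₗ
        map (F.lTensor H ∘ₗ Coalgebra.comul) (G ∘ₗ γ ∘ₗ π) ∘ₗ Coalgebra.comul) ∘ₗ γ := by
          rw [map_comp_comul_of_comodule hγ]
          rfl
    _ = (map κ P ∘ₗ (map F (G ∘ₗ γ ∘ₗ π) ∘ₗ Coalgebra.comul).lTensor H) ∘ₗ
        Coalgebra.comul ∘ₗ γ := by
          rw [assoc_map_lTensor_comp_comul]
          rfl
    _ = _ := by rw [LinearMap.map_comp_lTensor]

end Coalgebra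

-- Evaluated at `x : C`, with `p = γ x₁`, `q = γ x₂`, `z = ι (ζ p₂)` and `w = γ x`, the two sides
-- read `Σ ks(p₁) u(z₁ q₁) bs(ζ z₂ * ζ q₂)` and `Σ ks(w₁) u(w₂) bs(ζ w₃)`.
theorem stmt16_general {k H C : Type*} [Field k] [Ring H] [HopfAlgebra k H]
    [AddCommGroup C] [Module k C] [Coalgebra k C]
    (B : Subalgebra k H)
    -- B is a left coideal subalgebra: Δ(B) ⊆ H ⊗ B
    (hB : ∀ b : B, Coalgebra.comul (b : H) ∈
      LinearMap.range (TensorProduct.map (LinearMap.id : H →ₗ[k] H) B.val.toLinearMap))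
    -- π : H → C = H/B⁺H, the quotient map of right H-module coalgebras
    (π : H →ₗ[k] C)
    -- the partially admissible mapping system (ζ, γ*):
    (ζ : H →ₗ[k] B) (γ : C →ₗ[k] H)
    -- ζ is a biunitary left B-module map
    (hζmod : ∀ (b : B) (h : H), ζ ((b : H) * h) = b * ζ h)
    (hζ1 : ζ 1 = 1)
    -- γ is a biunitary right H/B⁺H-comodule map
    (hγcomod : (TensorProduct.map LinearMap.id π) ∘ₗ Coalgebra.comul ∘ₗ γ
      = (TensorProduct.map γ LinearMap.id) ∘ₗ Coalgebra.comul)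
    -- (ι∘ζ) ∗ (γ∘π) = id_H
    (hmain : LinearMap.mul' k H ∘ₗ
        TensorProduct.map (B.val.toLinearMap ∘ₗ ζ) (γ ∘ₗ π) ∘ₗ Coalgebra.comul
      = LinearMap.id) :
    ∀ (ks u : Module.Dual k H) (bs : Module.Dual k B),
      LinearMap.mul' k k ∘ₗ
        TensorProduct.map ks
          (LinearMap.mul' k k ∘ₗ
            TensorProduct.map (u ∘ₗ LinearMap.mul' k H)
              (bs ∘ₗ LinearMap.mul' k B ∘ₗ TensorProduct.map ζ ζ) ∘ₗ
            (TensorProduct.tensorTensorTensorComm k H H H H).toLinearMap) ∘ₗ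
        (TensorProduct.assoc k H (H ⊗[k] H) (H ⊗[k] H)).toLinearMap ∘ₗ
        TensorProduct.map
          ((TensorProduct.map LinearMap.id
              ((Coalgebra.comul : H →ₗ[k] H ⊗[k] H) ∘ₗ B.val.toLinearMap ∘ₗ ζ)) ∘ₗ
            (Coalgebra.comul : H →ₗ[k] H ⊗[k] H) ∘ₗ γ)
          ((Coalgebra.comul : H →ₗ[k] H ⊗[k] H) ∘ₗ γ) ∘ₗ
        (Coalgebra.comul : C →ₗ[k] C ⊗[k] C)
      = LinearMap.mul' k k ∘ₗ
          TensorProduct.map ks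
            (LinearMap.mul' k k ∘ₗ TensorProduct.map u (bs ∘ₗ ζ) ∘ₗ
              (Coalgebra.comul : H →ₗ[k] H ⊗[k] H)) ∘ₗ
          (Coalgebra.comul : H →ₗ[k] H ⊗[k] H) ∘ₗ γ := by
  intro ks u bs
  have key : ((LinearMap.mul' k k ∘ₗ map u bs) ∘ₗ LinearMap.mul' k (H ⊗[k] B) ∘ₗ
        map (ζ.lTensor H) (ζ.lTensor H)) ∘ₗ
        map (Coalgebra.comul ∘ₗ B.val.toLinearMap ∘ₗ ζ) (Coalgebra.comul ∘ₗ γ ∘ₗ π) ∘ₗ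
          Coalgebra.comul =
      LinearMap.mul' k k ∘ₗ map u (bs ∘ₗ ζ) ∘ₗ Coalgebra.comul :=
    calc _ = (LinearMap.mul' k k ∘ₗ map u bs) ∘ₗ LinearMap.mul' k (H ⊗[k] B) ∘ₗ
          map (ζ.lTensor H ∘ₗ Coalgebra.comul ∘ₗ B.val.toLinearMap ∘ₗ ζ)
            (ζ.lTensor H ∘ₗ Coalgebra.comul ∘ₗ γ ∘ₗ π) ∘ₗ Coalgebra.comul := by
            rw [map_comp (ζ.lTensor H) (ζ.lTensor H)]
            rfl
      _ = (LinearMap.mul' k k ∘ₗ map u bs ∘ₗ ζ.lTensor H) ∘ₗ Coalgebra.comul := by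
            rw [mul'_map_lTensor_comul_comp_comul hB hζmod hζ1 hmain]
            rfl
      _ = _ := by
            rw [LinearMap.map_comp_lTensor]
            rfl
  rw [mul'_comp_map_comp_tensorTensorTensorComm,
    map_comp_assoc_comp_map_comp_comul_of_comodule hγcomod, key]

theorem stmt16 {k H C : Type*} [Field k] [Ring H] [HopfAlgebra k H] [FiniteDimensional k H]
    [AddCommGroup C] [Module k C] [Coalgebra k C]
    (B : Subalgebra k H)
    -- B is a left coideal subalgebra: Δ(B) ⊆ H ⊗ B
    (hB : ∀ b : B, Coalgebra.comul (b : H) ∈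
      LinearMap.range (TensorProduct.map (LinearMap.id : H →ₗ[k] H) B.val.toLinearMap))
    -- π : H → C = H/B⁺H, the quotient map of right H-module coalgebras
    (π : H →ₗ[k] C) (hπsurj : Function.Surjective π)
    (hπcounit : (Coalgebra.counit : C →ₗ[k] k) ∘ₗ π = Coalgebra.counit)
    (hπcomul : Coalgebra.comul ∘ₗ π = (TensorProduct.map π π) ∘ₗ Coalgebra.comul)
    (hπker : LinearMap.ker π = Submodule.span k
      {z : H | ∃ b ∈ B, ∃ h : H, Coalgebra.counit (R := k) b = 0 ∧ z = b * h})
    -- the right H-action ⊲ on C, for which π is a right H-module map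
    (act : C ⊗[k] H →ₗ[k] C)
    (hact : ∀ a h : H, act (π a ⊗ₜ[k] h) = π (a * h))
    -- the partially admissible mapping system (ζ, γ*):
    (ζ ζbar : H →ₗ[k] B) (γ γbar : C →ₗ[k] H)
    -- ζ is a biunitary left B-module map
    (hζmod : ∀ (b : B) (h : H), ζ ((b : H) * h) = b * ζ h)
    (hζ1 : ζ 1 = 1)
    (hζε : ∀ h : H, Coalgebra.counit (R := k) ((ζ h : H)) = Coalgebra.counit (R := k) h)
    -- γ is a biunitary right H/B⁺H-comodule map
    (hγcomod : (TensorProduct.map LinearMap.id π) ∘ₗ Coalgebra.comul ∘ₗ γ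
      = (TensorProduct.map γ LinearMap.id) ∘ₗ Coalgebra.comul)
    (hγ1 : γ (π 1) = 1)
    (hγε : ∀ x : C, Coalgebra.counit (R := k) (γ x) = Coalgebra.counit (R := k) x)
    -- ζ̄ is the convolution inverse of ζ
    (hζinv₁ : convMap k ζ ζbar =
      (Algebra.linearMap k B) ∘ₗ (Coalgebra.counit : H →ₗ[k] k))
    (hζinv₂ : convMap k ζbar ζ =
      (Algebra.linearMap k B) ∘ₗ (Coalgebra.counit : H →ₗ[k] k))
    -- γ̄ is the convolution inverse of γ
    (hγinv₁ : convMap k γ γbar =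
      (Algebra.linearMap k H) ∘ₗ (Coalgebra.counit : C →ₗ[k] k))
    (hγinv₂ : convMap k γbar γ =
      (Algebra.linearMap k H) ∘ₗ (Coalgebra.counit : C →ₗ[k] k))
    -- (ι∘ζ) ∗ (γ∘π) = id_H
    (hmain : LinearMap.mul' k H ∘ₗ
        TensorProduct.map (B.val.toLinearMap ∘ₗ ζ) (γ ∘ₗ π) ∘ₗ Coalgebra.comul
      = LinearMap.id) :
    ∀ (ks u : Module.Dual k H) (bs : Module.Dual k B),
      LinearMap.mul' k k ∘ₗ
        TensorProduct.map ks
          (LinearMap.mul' k k ∘ₗ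
            TensorProduct.map (u ∘ₗ LinearMap.mul' k H)
              (bs ∘ₗ LinearMap.mul' k B ∘ₗ TensorProduct.map ζ ζ) ∘ₗ
            (TensorProduct.tensorTensorTensorComm k H H H H).toLinearMap) ∘ₗ
        (TensorProduct.assoc k H (H ⊗[k] H) (H ⊗[k] H)).toLinearMap ∘ₗ
        TensorProduct.map
          ((TensorProduct.map LinearMap.id
              ((Coalgebra.comul : H →ₗ[k] H ⊗[k] H) ∘ₗ B.val.toLinearMap ∘ₗ ζ)) ∘ₗ
            (Coalgebra.comul : H →ₗ[k] H ⊗[k] H) ∘ₗ γ)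
          ((Coalgebra.comul : H →ₗ[k] H ⊗[k] H) ∘ₗ γ) ∘ₗ
        (Coalgebra.comul : C →ₗ[k] C ⊗[k] C)
      = LinearMap.mul' k k ∘ₗ
          TensorProduct.map ks
            (LinearMap.mul' k k ∘ₗ TensorProduct.map u (bs ∘ₗ ζ) ∘ₗ
              (Coalgebra.comul : H →ₗ[k] H ⊗[k] H)) ∘ₗ
          (Coalgebra.comul : H →ₗ[k] H ⊗[k] H) ∘ₗ γ :=
  stmt16_general B hB π ζ γ hζmod hζ1 hγcomod hmain
end

section
/- Let H be the 4-dimensional Taft (Sweedler) algebra over a field k of characteristic ≠ 2, generated by g, x with g² = 1, x² = 0, xg = -gx, Δ(g) = g⊗g, Δ(x) = x⊗1 + g⊗x. Let B = span{1, x} and fix λ ∈ k. Define ζ : H → B by ζ(1) = 1, ζ(g) = 1 + λx, ζ(x) = ζ(xg) = x, extended linearly on the basis {1, g, x, xg}. Then ζ is a left B-module map which is unitary and counitary, and ζ is convolution invertible. -/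
/-!
Write `ζ = 1 + δ` in the convolution ring of linear maps `H → H`, where `1 = η ∘ ε`. On the
basis, `δ` takes the values `0, λx, x, x`, so `δ` takes values in `k x`; since `x² = 0`, every
product `δ(a) δ(b)` vanishes and hence `δ * δ = 0`. Then `1 - δ = 2 η ε - ζ` is a two-sided
convolution inverse of `ζ`, again with values in `B = k 1 + k x`. The module map property
only needs `ζ (x h) = x ζ(h)`, checked on the basis.
-/

open TensorProduct

open WithConv

theorem Fin.forall_fin_four {P : Fin 4 → Prop} : (∀ i, P i) ↔ P 0 ∧ P 1 ∧ P 2 ∧ P 3 := by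
  refine ⟨fun h ↦ ⟨h 0, h 1, h 2, h 3⟩, fun ⟨h0, h1, h2, h3⟩ i ↦ ?_⟩
  fin_cases i
  exacts [h0, h1, h2, h3]

theorem Module.Basis.apply_mem_of_forall_apply_basis_mem {ι R M N : Type*} [Semiring R]
    [AddCommMonoid M] [Module R M] [AddCommMonoid N] [Module R N] (b : Module.Basis ι R M)
    {f : M →ₗ[R] N} {p : Submodule R N} (hf : ∀ i, f (b i) ∈ p) (m : M) : f m ∈ p := by
  have hle : (Submodule.span R (Set.range b)).map f ≤ p :=
    (Submodule.map_span_le f _ p).2 (Set.forall_mem_range.2 hf)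
  rw [b.span_eq] at hle
  exact hle ⟨m, Submodule.mem_top, rfl⟩

theorem LinearMap.map_mul_of_mem_span {R A : Type*} [CommSemiring R] [Semiring A] [Algebra R A]
    {f : A →ₗ[R] A} {s : Set A} (hs : ∀ a ∈ s, ∀ y, f (a * y) = a * f y)
    {b : A} (hb : b ∈ Submodule.span R s) (y : A) : f (b * y) = b * f y := by
  induction hb using Submodule.span_induction with
  | mem a ha => exact hs a ha y
  | zero => simp
  | add a c _ _ ha hc => simp only [add_mul, map_add, ha, hc]
  | smul r a _ ha => simp only [smul_mul_assoc, map_smul, ha]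

theorem LinearMap.convMul_eq_zero_of_mem_span_singleton {R C A : Type*} [CommSemiring R]
    [AddCommMonoid C] [Module R C] [CoalgebraStruct R C] [Semiring A] [Algebra R A]
    {x : A} (hx : x * x = 0) {f g : WithConv (C →ₗ[R] A)}
    (hf : ∀ c, f c ∈ R ∙ x) (hg : ∀ c, g c ∈ R ∙ x) : f * g = 0 := by
  have hfg : ∀ a b, f a * g b = 0 := fun a b ↦ by
    obtain ⟨r, hr⟩ := Submodule.mem_span_singleton.1 (hf a)
    obtain ⟨s, hs⟩ := Submodule.mem_span_singleton.1 (hg b)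
    rw [← hr, ← hs, smul_mul_smul_comm, hx, smul_zero]
  ext c
  rw [convMul_apply]
  induction Coalgebra.comul (R := R) c using TensorProduct.induction_on with
  | zero => simp
  | tmul a b => simp [hfg]
  | add t u ht hu => simp [ht, hu]

theorem one_add_mul_one_sub_of_mul_self_eq_zero {R : Type*} [Ring R] {a : R} (ha : a * a = 0) :
    (1 + a) * (1 - a) = 1 := by
  rw [← (Commute.one_left a).mul_self_sub_mul_self_eq, ha, mul_one, sub_zero]

theorem one_sub_mul_one_add_of_mul_self_eq_zero {R : Type*} [Ring R] {a : R} (ha : a * a = 0) :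
    (1 - a) * (1 + a) = 1 := by
  rw [← (Commute.one_left a).mul_self_sub_mul_self_eq', ha, mul_one, sub_zero]

namespace Taft

variable {k H : Type*} [CommRing k] [Ring H] [Bialgebra k H] {g x : H}
  {bH : Module.Basis (Fin 4) k H} {lam : k} {ζ : H →ₗ[k] H}

theorem sub_algebraMap_counit_mem_span_singleton
    (hεg : Coalgebra.counit (R := k) g = 1) (hεx : Coalgebra.counit (R := k) x = 0)
    (hb0 : bH 0 = 1) (hb1 : bH 1 = g) (hb2 : bH 2 = x) (hb3 : bH 3 = x * g)
    (hζ1 : ζ 1 = 1) (hζg : ζ g = 1 + lam • x) (hζx : ζ x = x) (hζxg : ζ (x * g) = x) (h : H) :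
    ζ h - algebraMap k H (Coalgebra.counit h) ∈ k ∙ x := by
  have hx : x ∈ k ∙ x := Submodule.mem_span_singleton_self x
  refine bH.apply_mem_of_forall_apply_basis_mem (f := ζ - Algebra.linearMap k H ∘ₗ Coalgebra.counit)
    (Fin.forall_fin_four.2 ⟨?_, ?_, ?_, ?_⟩) h <;>
    simp only [LinearMap.sub_apply, LinearMap.comp_apply, Algebra.linearMap_apply,
      hb0, hb1, hb2, hb3, hζ1, hζg, hζx, hζxg, Bialgebra.counit_one, Bialgebra.counit_mul, hεg,
      hεx, map_one, map_zero, zero_mul, sub_zero, sub_self, add_sub_cancel_left]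
  · exact zero_mem _
  · exact Submodule.smul_mem _ _ hx
  · exact hx
  · exact hx

theorem map_mul_left_eq_mul_map (hx2 : x * x = 0)
    (hb0 : bH 0 = 1) (hb1 : bH 1 = g) (hb2 : bH 2 = x) (hb3 : bH 3 = x * g)
    (hζ1 : ζ 1 = 1) (hζg : ζ g = 1 + lam • x) (hζx : ζ x = x) (hζxg : ζ (x * g) = x) (h : H) :
    ζ (x * h) = x * ζ h := by
  have hcomm : ζ ∘ₗ LinearMap.mulLeft k x = LinearMap.mulLeft k x ∘ₗ ζ :=
    bH.ext (Fin.forall_fin_four.2 ⟨?_, ?_, ?_, ?_⟩)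
  · exact LinearMap.congr_fun hcomm h
  all_goals
    simp only [LinearMap.comp_apply, LinearMap.mulLeft_apply, hb0, hb1, hb2, hb3, ← mul_assoc,
      hx2, zero_mul, map_zero, hζ1, hζg, hζx, hζxg, mul_one, mul_add, mul_smul_comm, smul_zero,
      add_zero]

end Taft

theorem stmt19_general {k H : Type*} [Field k]
    [Ring H] [HopfAlgebra k H] (g x : H)
    -- defining relations of the 4-dimensional Taft algebra
    (hx2 : x * x = 0)
    (hεg : Coalgebra.counit (R := k) g = 1)
    (hεx : Coalgebra.counit (R := k) x = 0)
    -- {1, g, x, xg} is a basis of H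
    (bH : Module.Basis (Fin 4) k H)
    (hb0 : bH 0 = 1) (hb1 : bH 1 = g) (hb2 : bH 2 = x) (hb3 : bH 3 = x * g)
    -- the coefficient λ and the map ζ, defined on the basis
    (lam : k) (ζ : H →ₗ[k] H)
    (hζ1 : ζ 1 = 1) (hζg : ζ g = 1 + lam • x) (hζx : ζ x = x) (hζxg : ζ (x * g) = x) :
    -- ζ takes values in B = span{1, x}
    (∀ h : H, ζ h ∈ Submodule.span k ({1, x} : Set H)) ∧
    -- ζ is a left B-module map
    (∀ b ∈ Submodule.span k ({1, x} : Set H), ∀ h : H, ζ (b * h) = b * ζ h) ∧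
    -- ζ is unitary and counitary
    ζ 1 = 1 ∧
    (∀ h : H, Coalgebra.counit (R := k) (ζ h) = Coalgebra.counit (R := k) h) ∧
    -- ζ is convolution invertible (with B-valued inverse)
    (∃ ζbar : H →ₗ[k] H,
      (∀ h : H, ζbar h ∈ Submodule.span k ({1, x} : Set H)) ∧
      convMap k ζ ζbar = (Algebra.linearMap k H) ∘ₗ (Coalgebra.counit : H →ₗ[k] k) ∧
      convMap k ζbar ζ = (Algebra.linearMap k H) ∘ₗ (Coalgebra.counit : H →ₗ[k] k)) := by
  set δ : WithConv (H →ₗ[k] H) := toConv ζ - 1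
  have hδ : ∀ h, δ h ∈ k ∙ x :=
    Taft.sub_algebraMap_counit_mem_span_singleton hεg hεx hb0 hb1 hb2 hb3 hζ1 hζg hζx hζxg
  have hδδ : δ * δ = 0 := LinearMap.convMul_eq_zero_of_mem_span_singleton hx2 hδ hδ
  have hζδ : toConv ζ = 1 + δ := (add_sub_cancel 1 _).symm
  have hB : ∀ (c : k), ∀ y ∈ k ∙ x, c • (1 : H) + y ∈ Submodule.span k ({1, x} : Set H) :=
    fun c y hy ↦ Submodule.mem_span_insert.2 ⟨c, y, hy, rfl⟩
  have hζ : ∀ h, ζ h = Coalgebra.counit (R := k) h • 1 + δ h := fun h ↦ by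
    rw [← Algebra.algebraMap_eq_smul_one]
    exact LinearMap.congr_fun (congrArg ofConv hζδ) h
  refine ⟨fun h ↦ hζ h ▸ hB _ _ (hδ h), ?_, hζ1, fun h ↦ ?_, (1 - δ).ofConv, fun h ↦ ?_, ?_, ?_⟩
  · refine fun b hb ↦ LinearMap.map_mul_of_mem_span ?_ hb
    rintro a (rfl | rfl) h
    · rw [one_mul, one_mul]
    · exact Taft.map_mul_left_eq_mul_map hx2 hb0 hb1 hb2 hb3 hζ1 hζg hζx hζxg h
  · obtain ⟨c, hc⟩ := Submodule.mem_span_singleton.1 (hδ h)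
    rw [hζ, ← hc, map_add, map_smul, map_smul, Bialgebra.counit_one, hεx, smul_zero, add_zero,
      smul_eq_mul, mul_one]
  · simpa [sub_eq_add_neg, Algebra.algebraMap_eq_smul_one] using hB _ _ (neg_mem (hδ h))
  · change ofConv (toConv ζ * (1 - δ)) = ofConv (1 : WithConv (H →ₗ[k] H))
    rw [hζδ, one_add_mul_one_sub_of_mul_self_eq_zero hδδ]
  · change ofConv ((1 - δ) * toConv ζ) = ofConv (1 : WithConv (H →ₗ[k] H))
    rw [hζδ, one_sub_mul_one_add_of_mul_self_eq_zero hδδ]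

theorem stmt19 {k H : Type*} [Field k] (hchar : (2 : k) ≠ 0)
    [Ring H] [HopfAlgebra k H] (g x : H)
    -- defining relations of the 4-dimensional Taft algebra
    (hg2 : g * g = 1) (hx2 : x * x = 0) (hxg : x * g = -(g * x))
    (hΔg : Coalgebra.comul (R := k) g = g ⊗ₜ[k] g)
    (hΔx : Coalgebra.comul (R := k) x = x ⊗ₜ[k] 1 + g ⊗ₜ[k] x)
    (hεg : Coalgebra.counit (R := k) g = 1)
    (hεx : Coalgebra.counit (R := k) x = 0)
    -- {1, g, x, xg} is a basis of H
    (bH : Module.Basis (Fin 4) k H)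
    (hb0 : bH 0 = 1) (hb1 : bH 1 = g) (hb2 : bH 2 = x) (hb3 : bH 3 = x * g)
    -- the coefficient λ and the map ζ, defined on the basis
    (lam : k) (ζ : H →ₗ[k] H)
    (hζ1 : ζ 1 = 1) (hζg : ζ g = 1 + lam • x) (hζx : ζ x = x) (hζxg : ζ (x * g) = x) :
    -- ζ takes values in B = span{1, x}
    (∀ h : H, ζ h ∈ Submodule.span k ({1, x} : Set H)) ∧
    -- ζ is a left B-module map
    (∀ b ∈ Submodule.span k ({1, x} : Set H), ∀ h : H, ζ (b * h) = b * ζ h) ∧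
    -- ζ is unitary and counitary
    ζ 1 = 1 ∧
    (∀ h : H, Coalgebra.counit (R := k) (ζ h) = Coalgebra.counit (R := k) h) ∧
    -- ζ is convolution invertible (with B-valued inverse)
    (∃ ζbar : H →ₗ[k] H,
      (∀ h : H, ζbar h ∈ Submodule.span k ({1, x} : Set H)) ∧
      convMap k ζ ζbar = (Algebra.linearMap k H) ∘ₗ (Coalgebra.counit : H →ₗ[k] k) ∧
      convMap k ζbar ζ = (Algebra.linearMap k H) ∘ₗ (Coalgebra.counit : H →ₗ[k] k)) :=
  stmt19_general g x hx2 hεg hεx bH hb0 hb1 hb2 hb3 lam ζ hζ1 hζg hζx hζxg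
end
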